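/- arXiv:1109.3273 — 5 statements merged into one kernel-verified Lean document; each statement's English description precedes it below -/
import Mathlib

section
/- For all integers n and all integers p ≥ 1, the plateau-counting numbers satisfy p · c(n,p) = (n - 2p) · c(n-3, p-1) + 2p · c(n-3, p). -/
/-- Steps of a Motzkin path: up, horizontal, down. -/
inductive Step : Type
  | U | H | D
  deriving DecidableEq

/-- A list of steps is a Motzkin path if every prefix has at least as many
up steps as down steps, and the total numbers of up and down steps agree. -/
def IsMotzkin (l : List Step) : Prop :=
  (∀ k : ℕ, (l.take k).count Step.D ≤ (l.take k).count Step.U) ∧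
    l.count Step.U = l.count Step.D

/-- The number of plateaus (occurrences of consecutive steps U, H, D) in a path. -/
def plateauCount (l : List Step) : ℕ :=
  ((Finset.range l.length).filter
    (fun i => (l.drop i).take 3 = [Step.U, Step.H, Step.D])).card

/-- `c n p` is the number of Motzkin paths of length `n` with exactly `p`
plateaus; it is `0` when `n < 0` or `p < 0`. -/
noncomputable def c (n p : ℤ) : ℕ :=
  if 0 ≤ n ∧ 0 ≤ p then
    Nat.card {l : List Step // l.length = n.toNat ∧ IsMotzkin l ∧ plateauCount l = p.toNat}
  else 0

open Finset

def isPlat (l : List Step) (i : ℕ) : Prop :=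
  (l.drop i).take 3 = [Step.U, Step.H, Step.D]

instance (l : List Step) (i : ℕ) : Decidable (isPlat l i) := by
  unfold isPlat; infer_instance

lemma take3_eq_iff (d : List Step) :
    d.take 3 = [Step.U, Step.H, Step.D] ↔
      (d[0]? = some Step.U ∧ d[1]? = some Step.H ∧ d[2]? = some Step.D) := by
  match d with
  | [] => simp
  | [a] => simp
  | [a, b] => simp
  | a :: b :: c :: t => simp

lemma isPlat_iff {l : List Step} {i : ℕ} :
    isPlat l i ↔ (l[i]? = some Step.U ∧ l[i+1]? = some Step.H ∧ l[i+2]? = some Step.D) := by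
  rw [isPlat, take3_eq_iff]
  simp [List.getElem?_drop]

lemma isPlat_le {l : List Step} {i : ℕ} (h : isPlat l i) : i + 3 ≤ l.length := by
  have := congrArg List.length h
  simp at this
  omega

def insP (w : List Step) (i : ℕ) : List Step := w.take i ++ [Step.U, Step.H, Step.D] ++ w.drop i

lemma length_insP (w : List Step) (i : ℕ) : (insP w i).length = w.length + 3 := by
  simp [insP]; omega

lemma insP_get {w : List Step} {i : ℕ} (hi : i ≤ w.length) (j : ℕ) :
    (insP w i)[j]? = if j < i then w[j]? else if j = i then some Step.U
      else if j = i + 1 then some Step.H else if j = i + 2 then some Step.D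
      else w[j-3]? := by
  have hA : (w.take i).length = i := by simp [hi]
  rw [insP, List.getElem?_append, List.getElem?_append]
  simp only [List.length_append, hA,
    show ([Step.U, Step.H, Step.D] : List Step).length = 3 from rfl]
  split_ifs with h1 h2 h3 h4 h5 h6 h7 h8 h9 <;> try omega
  · rw [List.getElem?_take]; rw [if_pos h2]
  · have : j - i = 0 := by omega
    rw [this]; rfl
  · have : j - i = 1 := by omega
    rw [this]; rfl
  · have : j - i = 2 := by omega
    rw [this]; rfl
  · rw [List.getElem?_drop]
    congr 1; omega
lemma isPlat_insP {w : List Step} {i : ℕ} (hi : i ≤ w.length) (j : ℕ) :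
    isPlat (insP w i) j ↔
      (j + 3 ≤ i ∧ isPlat w j) ∨ j = i ∨ (i + 3 ≤ j ∧ isPlat w (j - 3)) := by
  simp only [isPlat_iff, insP_get hi]
  by_cases h1 : j + 3 ≤ i
  · rw [if_pos (by omega : j < i), if_pos (by omega : j + 1 < i), if_pos (by omega : j + 2 < i)]
    constructor
    · intro h; exact Or.inl ⟨h1, h⟩
    · rintro (⟨_, h⟩ | h | ⟨h, _⟩) <;> first | exact h | omega
  · by_cases h2 : j = i
    · subst h2
      rw [if_neg (by omega), if_pos rfl, if_neg (by omega), if_neg (by omega),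
        if_pos rfl, if_neg (by omega), if_neg (by omega), if_neg (by omega), if_pos rfl]
      simp
    · by_cases h3 : i + 3 ≤ j
      · rw [if_neg (by omega), if_neg (by omega), if_neg (by omega), if_neg (by omega),
          if_neg (by omega), if_neg (by omega), if_neg (by omega), if_neg (by omega),
          if_neg (by omega), if_neg (by omega), if_neg (by omega), if_neg (by omega)]
        rw [show j + 1 - 3 = j - 3 + 1 by omega, show j + 2 - 3 = j - 3 + 2 by omega]
        constructor
        · intro h; exact Or.inr (Or.inr ⟨h3, h⟩)
        · rintro (⟨h, _⟩ | h | ⟨_, h⟩) <;> first | exact h | omega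
      · -- j ∈ {i-2, i-1, i+1, i+2}; both sides false
        constructor
        · rintro ⟨hU, hH, hD⟩
          exfalso
          have hc : j + 2 = i ∨ j + 1 = i ∨ j = i + 1 ∨ j = i + 2 := by omega
          rcases hc with hc | hc | hc | hc
          · rw [if_neg (by omega), if_pos (by omega : j + 2 = i)] at hD
            simp at hD
          · rw [if_neg (by omega), if_pos (by omega : j + 1 = i)] at hH
            simp at hH
          · rw [if_neg (by omega), if_neg (by omega), if_pos (by omega : j = i + 1)] at hU
            simp at hU
          · rw [if_neg (by omega), if_neg (by omega), if_neg (by omega),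
              if_pos (by omega : j = i + 2)] at hU
            simp at hU
        · rintro (⟨h, _⟩ | h | ⟨h, _⟩) <;> omega
lemma take_insP_small {w : List Step} {i k : ℕ} (hi : i ≤ w.length) (hk : k ≤ i) :
    (insP w i).take k = w.take k := by
  rw [insP, List.take_append, List.take_append]
  have h1 : (w.take i).length = i := by simp [hi]
  rw [h1, show k - i = 0 by omega, List.take_zero, List.append_nil,
    show k - (w.take i ++ [Step.U, Step.H, Step.D]).length = 0 by simp [h1]; omega,
    List.take_zero, List.append_nil, List.take_take, min_eq_left hk]

lemma take_insP_mid {w : List Step} {i k : ℕ} (hi : i ≤ w.length) (hk : i ≤ k) (hk3 : k ≤ i + 3) :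
    (insP w i).take k = w.take i ++ ([Step.U, Step.H, Step.D].take (k - i)) := by
  rw [insP, List.take_append, List.take_append]
  have h1 : (w.take i).length = i := by simp [hi]
  rw [h1, show k - (w.take i ++ [Step.U, Step.H, Step.D]).length = 0 by simp [h1]; omega,
    List.take_zero, List.append_nil, List.take_take, min_eq_right hk]

lemma take_insP_big {w : List Step} {i k : ℕ} (hi : i ≤ w.length) (hk : i + 3 ≤ k) :
    (insP w i).take k = w.take i ++ [Step.U, Step.H, Step.D] ++ (w.drop i).take (k - i - 3) := by
  rw [insP, List.take_append, List.take_append]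
  have h1 : (w.take i).length = i := by simp [hi]
  rw [h1, List.take_take, min_eq_right (by omega : i ≤ k),
    show (w.take i ++ [Step.U, Step.H, Step.D]).length = i + 3 by simp [h1],
    List.take_of_length_le (by simp; omega : ([Step.U, Step.H, Step.D] : List Step).length ≤ k - i),
    show k - (i + 3) = k - i - 3 by omega]

lemma take_decomp {w : List Step} {i k : ℕ} (hk : i ≤ k) :
    w.take k = w.take i ++ (w.drop i).take (k - i) := by
  rw [← List.take_add]
  congr 1
  omega
lemma count_insP (w : List Step) {i : ℕ} (hi : i ≤ w.length) (s : Step) :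
    (insP w i).count s = w.count s + ([Step.U, Step.H, Step.D] : List Step).count s := by
  conv_rhs => rw [← List.take_append_drop i w]
  rw [insP, List.count_append, List.count_append, List.count_append]
  omega

lemma isMotzkin_insP {w : List Step} {i : ℕ} (hi : i ≤ w.length) :
    IsMotzkin (insP w i) ↔ IsMotzkin w := by
  constructor
  · rintro ⟨hpre, htot⟩
    constructor
    · intro k
      by_cases hk : k ≤ i
      · have := hpre k
        rwa [take_insP_small hi hk] at this
      · have h3 := hpre (k + 3)
        rw [take_insP_big hi (by omega)] at h3
        rw [take_decomp (show i ≤ k by omega)]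
        simp only [List.count_append, show k + 3 - i - 3 = k - i by omega] at h3 ⊢
        simp [List.count_cons] at h3
        omega
    · have hU := count_insP w hi Step.U
      have hD := count_insP w hi Step.D
      simp [List.count_cons] at hU hD
      omega
  · rintro ⟨hpre, htot⟩
    constructor
    · intro k
      by_cases hk : k ≤ i
      · rw [take_insP_small hi hk]; exact hpre k
      · by_cases hk3 : k ≤ i + 3
        · rw [take_insP_mid hi (by omega) hk3]
          have hblk : ∀ m : ℕ, (([Step.U, Step.H, Step.D] : List Step).take m).count Step.D
              ≤ (([Step.U, Step.H, Step.D] : List Step).take m).count Step.U := by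
            intro m
            match m with
            | 0 => simp
            | 1 => simp
            | 2 => simp [List.count_cons]
            | (n+3) => rw [List.take_of_length_le (by simp)]; simp [List.count_cons]
          have := hpre i
          have hb := hblk (k - i)
          simp only [List.count_append]
          omega
        · rw [take_insP_big hi (by omega)]
          have := hpre (k - 3)
          rw [take_decomp (show i ≤ k - 3 by omega)] at this
          simp only [List.count_append, show k - 3 - i = k - i - 3 by omega] at this ⊢
          simp [List.count_cons]
          omega
    · have hU := count_insP w hi Step.U
      have hD := count_insP w hi Step.D
      simp [List.count_cons] at hU hD
      omega
def delP (l : List Step) (i : ℕ) : List Step := l.take i ++ l.drop (i + 3)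

lemma length_delP {l : List Step} {i : ℕ} (h3 : i + 3 ≤ l.length) :
    (delP l i).length = l.length - 3 := by
  simp [delP]
  omega

lemma delP_insP {w : List Step} {i : ℕ} (hi : i ≤ w.length) : delP (insP w i) i = w := by
  have h1 : (w.take i).length = i := by simp [hi]
  rw [delP]
  have ht : (insP w i).take i = w.take i := by
    rw [take_insP_small hi le_rfl]
  have hd : (insP w i).drop (i + 3) = w.drop i := by
    rw [insP, List.drop_append, List.drop_append]
    rw [List.drop_of_length_le (show (w.take i).length ≤ i + 3 by omega),
      show i + 3 - (w.take i).length = 3 by omega,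
      show i + 3 - (w.take i ++ [Step.U, Step.H, Step.D]).length = 0 by simp [h1]]
    simp
  rw [ht, hd, List.take_append_drop]

lemma insP_delP {l : List Step} {i : ℕ} (h : isPlat l i) : insP (delP l i) i = l := by
  have h3 : i + 3 ≤ l.length := isPlat_le h
  have h1 : (l.take i).length = i := by simp; omega
  have ht : (delP l i).take i = l.take i := by
    rw [delP, List.take_append, h1, show i - i = 0 by omega]
    simp [List.take_take]
  have hd : (delP l i).drop i = l.drop (i + 3) := by
    rw [delP, List.drop_append, h1, show i - i = 0 by omega]
    rw [List.drop_of_length_le (le_of_eq h1), List.nil_append, List.drop_zero]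
  rw [insP, ht, hd]
  have hblk : [Step.U, Step.H, Step.D] = (l.drop i).take 3 := h.symm
  rw [List.append_assoc, hblk, show l.drop (i+3) = (l.drop i).drop 3 by rw [List.drop_drop],
    List.take_append_drop, List.take_append_drop]
def Pl (w : List Step) : Finset ℕ := (Finset.range w.length).filter (fun j => isPlat w j)

lemma mem_Pl {w : List Step} {j : ℕ} : j ∈ Pl w ↔ isPlat w j := by
  constructor
  · intro h; exact (Finset.mem_filter.mp h).2
  · intro h
    exact Finset.mem_filter.mpr ⟨Finset.mem_range.mpr (by have := isPlat_le h; omega), h⟩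

lemma pc_eq (w : List Step) : plateauCount w = (Pl w).card := by
  unfold plateauCount Pl isPlat
  congr 1

lemma no_adjacent {w : List Step} {j : ℕ} (h1 : isPlat w j) (h2 : isPlat w (j + 1)) : False := by
  rw [isPlat_iff] at h1 h2
  rw [h2.1] at h1
  simp at h1

def Strad (i j : ℕ) : Prop := j < i ∧ i ≤ j + 2

instance (i j : ℕ) : Decidable (Strad i j) := by unfold Strad; infer_instance

lemma strad_unique {w : List Step} {i j j' : ℕ} (h1 : isPlat w j) (h2 : isPlat w j')
    (s1 : Strad i j) (s2 : Strad i j') : j = j' := by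
  by_contra hne
  have : j' = j + 1 ∨ j = j' + 1 := by unfold Strad at s1 s2; omega
  rcases this with h | h
  · exact no_adjacent h1 (h ▸ h2)
  · exact no_adjacent h2 (h ▸ h1)

noncomputable def exceptCount (w : List Step) (i : ℕ) : ℕ :=
  ((Pl w).filter (fun j => ¬ Strad i j)).card

lemma pc_insP {w : List Step} {i : ℕ} (hi : i ≤ w.length) :
    plateauCount (insP w i) = exceptCount w i + 1 := by
  rw [pc_eq, exceptCount]
  have hset : Pl (insP w i) =
      insert i (((Pl w).filter (fun j => ¬ Strad i j)).image
        (fun j => if j + 3 ≤ i then j else j + 3)) := by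
    ext a
    rw [mem_Pl, isPlat_insP hi]
    simp only [Finset.mem_insert, Finset.mem_image, Finset.mem_filter, mem_Pl]
    constructor
    · rintro (⟨h3, hp⟩ | h | ⟨h3, hp⟩)
      · exact Or.inr ⟨a, ⟨⟨hp, by unfold Strad; omega⟩, by rw [if_pos h3]⟩⟩
      · exact Or.inl h
      · refine Or.inr ⟨a - 3, ⟨⟨hp, ?_⟩, ?_⟩⟩
        · unfold Strad; omega
        · rw [if_neg (by omega)]; omega
    · rintro (h | ⟨j, ⟨⟨hp, hs⟩, hj⟩⟩)
      · exact Or.inr (Or.inl h)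
      · by_cases hc : j + 3 ≤ i
        · rw [if_pos hc] at hj; subst hj; exact Or.inl ⟨hc, hp⟩
        · rw [if_neg hc] at hj
          have hij : i ≤ j := by unfold Strad at hs; omega
          subst hj
          refine Or.inr (Or.inr ⟨by omega, ?_⟩)
          rwa [show j + 3 - 3 = j by omega]
  rw [hset]
  rw [Finset.card_insert_of_notMem, Finset.card_image_of_injOn]
  · intro a ha b hb hab
    simp only [Finset.mem_coe, Finset.mem_filter, mem_Pl] at ha hb
    have ha' : i ≤ a ∨ a + 3 ≤ i := by unfold Strad at ha; omega
    have hb' : i ≤ b ∨ b + 3 ≤ i := by unfold Strad at hb; omega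
    simp only at hab
    split_ifs at hab <;> omega
  · intro hmem
    simp only [Finset.mem_image, Finset.mem_filter, mem_Pl] at hmem
    obtain ⟨j, ⟨hp, hs⟩, hj⟩ := hmem
    by_cases hc : j + 3 ≤ i
    · rw [if_pos hc] at hj; omega
    · rw [if_neg hc] at hj
      unfold Strad at hs
      omega
lemma straddled_eq (w : List Step) :
    (Finset.range (w.length + 1)).filter (fun i => ∃ j ∈ Pl w, Strad i j)
      = (Pl w).biUnion (fun j => {j + 1, j + 2}) := by
  ext i
  simp only [Finset.mem_filter, Finset.mem_range, Finset.mem_biUnion, Finset.mem_insert,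
    Finset.mem_singleton]
  constructor
  · rintro ⟨_, j, hj, hs⟩
    exact ⟨j, hj, by unfold Strad at hs; omega⟩
  · rintro ⟨j, hj, hij⟩
    have h3 := isPlat_le (mem_Pl.mp hj)
    exact ⟨by omega, j, hj, by unfold Strad; omega⟩

lemma card_straddled (w : List Step) :
    ((Finset.range (w.length + 1)).filter (fun i => ∃ j ∈ Pl w, Strad i j)).card
      = 2 * plateauCount w := by
  rw [straddled_eq, Finset.card_biUnion, pc_eq]
  · rw [Finset.sum_congr rfl (fun j _ => by
      rw [Finset.card_insert_of_notMem (by simp), Finset.card_singleton])]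
    rw [Finset.sum_const, smul_eq_mul]
    ring
  · intro j hj j' hj' hne
    rw [Function.onFun, Finset.disjoint_left]
    intro a ha ha'
    simp only [Finset.mem_insert, Finset.mem_singleton] at ha ha'
    apply hne
    have hp := mem_Pl.mp hj
    have hp' := mem_Pl.mp hj'
    have : j = j' ∨ j' = j + 1 ∨ j = j' + 1 := by omega
    rcases this with h | h | h
    · exact h
    · exact absurd (no_adjacent hp (h ▸ hp')) (fun x => x)
    · exact absurd (no_adjacent hp' (h ▸ hp)) (fun x => x)

lemma two_pc_le (w : List Step) : 2 * plateauCount w ≤ w.length := by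
  rw [← card_straddled]
  calc ((Finset.range (w.length + 1)).filter (fun i => ∃ j ∈ Pl w, Strad i j)).card
      ≤ (Finset.Ico 1 (w.length + 1)).card := by
        apply Finset.card_le_card
        intro a ha
        simp only [Finset.mem_filter, Finset.mem_range] at ha
        obtain ⟨h1, j, hj, hs⟩ := ha
        unfold Strad at hs
        simp only [Finset.mem_Ico]
        omega
    _ = w.length := by simp

lemma exceptCount_strad {w : List Step} {i : ℕ} (h : ∃ j ∈ Pl w, Strad i j) :
    exceptCount w i + 1 = plateauCount w := by
  rw [pc_eq, exceptCount]
  obtain ⟨j0, hj0, hs0⟩ := h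
  have hone : (Pl w).filter (fun j => Strad i j) = {j0} := by
    ext a
    simp only [Finset.mem_filter, Finset.mem_singleton]
    constructor
    · rintro ⟨ha, hsa⟩
      exact strad_unique (mem_Pl.mp ha) (mem_Pl.mp hj0) hsa hs0
    · rintro rfl; exact ⟨hj0, hs0⟩
  have := Finset.card_filter_add_card_filter_not (s := Pl w)
    (p := fun j => Strad i j)
  rw [hone, Finset.card_singleton] at this
  omega

lemma exceptCount_nostrad {w : List Step} {i : ℕ} (h : ¬ ∃ j ∈ Pl w, Strad i j) :
    exceptCount w i = plateauCount w := by
  rw [pc_eq, exceptCount]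
  congr 1
  apply Finset.filter_true_of_mem
  intro j hj hs
  exact h ⟨j, hj, hs⟩

lemma pc_pos_of_strad {w : List Step} {i : ℕ} (h : ∃ j ∈ Pl w, Strad i j) :
    1 ≤ plateauCount w := by
  obtain ⟨j, hj, _⟩ := h
  rw [pc_eq]
  exact Finset.card_pos.mpr ⟨j, hj⟩

lemma count_i (w : List Step) (P : ℕ) (hP : 1 ≤ P) :
    ((Finset.range (w.length + 1)).filter (fun i => exceptCount w i = P - 1)).card
      = if plateauCount w = P - 1 then (w.length + 1) - 2 * (P - 1)
        else if plateauCount w = P then 2 * P else 0 := by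
  by_cases hq1 : plateauCount w = P - 1
  · rw [if_pos hq1]
    have hfil : (Finset.range (w.length + 1)).filter (fun i => exceptCount w i = P - 1)
        = (Finset.range (w.length + 1)).filter (fun i => ¬ ∃ j ∈ Pl w, Strad i j) := by
      apply Finset.filter_congr
      intro i _
      constructor
      · intro he
        intro hex
        have h1 := exceptCount_strad hex
        have h2 := pc_pos_of_strad hex
        omega
      · intro hex
        rw [exceptCount_nostrad hex, hq1]
    rw [hfil, Finset.filter_not, Finset.card_sdiff_of_subset (Finset.filter_subset _ _),
      card_straddled, Finset.card_range, hq1]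
  · rw [if_neg hq1]
    by_cases hq2 : plateauCount w = P
    · rw [if_pos hq2]
      have hfil : (Finset.range (w.length + 1)).filter (fun i => exceptCount w i = P - 1)
          = (Finset.range (w.length + 1)).filter (fun i => ∃ j ∈ Pl w, Strad i j) := by
        apply Finset.filter_congr
        intro i _
        constructor
        · intro he
          by_contra hex
          rw [exceptCount_nostrad hex] at he
          omega
        · intro hex
          have := exceptCount_strad hex
          omega
      rw [hfil, card_straddled, hq2]
    · rw [if_neg hq2]
      rw [Finset.card_eq_zero, Finset.filter_eq_empty_iff]
      intro i _
      intro he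
      by_cases hex : ∃ j ∈ Pl w, Strad i j
      · have h1 := exceptCount_strad hex
        have h2 := pc_pos_of_strad hex
        omega
      · rw [exceptCount_nostrad hex] at he
        omega
instance : Fintype Step :=
  ⟨{Step.U, Step.H, Step.D}, by intro x; cases x <;> decide⟩

open Classical in
noncomputable def MotzF (m : ℕ) : Finset (List.Vector Step m) :=
  Finset.univ.filter (fun v => IsMotzkin v.1)

open Classical in
noncomputable def MotzP (m p : ℕ) : Finset (List.Vector Step m) :=
  Finset.univ.filter (fun v => IsMotzkin v.1 ∧ plateauCount v.1 = p)

lemma card_c (m p : ℕ) :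
    Nat.card {l : List Step // l.length = m ∧ IsMotzkin l ∧ plateauCount l = p}
      = (MotzP m p).card := by
  classical
  have e : {l : List Step // l.length = m ∧ IsMotzkin l ∧ plateauCount l = p}
      ≃ {v : List.Vector Step m // IsMotzkin v.1 ∧ plateauCount v.1 = p} :=
    { toFun := fun x => ⟨⟨x.1, x.2.1⟩, x.2.2⟩
      invFun := fun v => ⟨v.1.1, v.1.2, v.2⟩
      left_inv := fun x => rfl
      right_inv := fun v => rfl }
  rw [Nat.card_congr e, Nat.card_eq_fintype_card, Fintype.card_subtype, MotzP]
lemma MotzF_filter (m q : ℕ) :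
    (MotzF m).filter (fun w => plateauCount w.1 = q) = MotzP m q := by
  classical
  ext v
  simp [MotzF, MotzP, and_assoc]

lemma mem_MotzP {m p : ℕ} {v : List.Vector Step m} :
    v ∈ MotzP m p ↔ IsMotzkin v.1 ∧ plateauCount v.1 = p := by
  classical
  simp [MotzP]

lemma mem_MotzF {m : ℕ} {v : List.Vector Step m} :
    v ∈ MotzF m ↔ IsMotzkin v.1 := by
  classical
  simp [MotzF]

theorem main_nat (m P : ℕ) (hP : 1 ≤ P) :
    P * (MotzP (m + 3) P).card
      = ((m + 1) - 2 * (P - 1)) * (MotzP m (P - 1)).card + 2 * P * (MotzP m P).card := by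
  classical
  have hT : ((MotzP (m+3) P).sigma (fun v => Pl v.1)).card = (MotzP (m+3) P).card * P := by
    rw [Finset.card_sigma]
    rw [Finset.sum_congr rfl (fun v hv => by
      rw [← pc_eq, (mem_MotzP.mp hv).2]), Finset.sum_const, smul_eq_mul]
  have hT' : ((MotzF m).sigma
        (fun w => (Finset.range (m+1)).filter (fun i => exceptCount w.1 i = P - 1))).card
      = ((m + 1) - 2 * (P - 1)) * (MotzP m (P-1)).card + 2 * P * (MotzP m P).card := by
    rw [Finset.card_sigma]
    have hterm : ∀ w ∈ MotzF m,
        ((Finset.range (m+1)).filter (fun i => exceptCount w.1 i = P - 1)).card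
          = (if plateauCount w.1 = P - 1 then (m+1) - 2*(P-1) else 0)
            + (if plateauCount w.1 = P then 2*P else 0) := by
      intro w _
      have hl : w.1.length = m := w.2
      rw [show m + 1 = w.1.length + 1 by omega, count_i w.1 P hP, hl]
      split_ifs with h1 h2 <;> omega
    rw [Finset.sum_congr rfl hterm, Finset.sum_add_distrib,
      ← Finset.sum_filter, ← Finset.sum_filter, MotzF_filter, MotzF_filter,
      Finset.sum_const, Finset.sum_const, smul_eq_mul, smul_eq_mul]
    ring
  have hbij : ((MotzP (m+3) P).sigma (fun v => Pl v.1)).card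
      = ((MotzF m).sigma
          (fun w => (Finset.range (m+1)).filter (fun i => exceptCount w.1 i = P - 1))).card := by
    refine Finset.card_bij'
      (fun y hy => ⟨⟨delP y.1.1 y.2, by
        have hp : isPlat y.1.1 y.2 := mem_Pl.mp (Finset.mem_sigma.mp hy).2
        rw [length_delP (isPlat_le hp), y.1.2]
        omega⟩, y.2⟩)
      (fun x hx => ⟨⟨insP x.1.1 x.2, by rw [length_insP, x.1.2]⟩, x.2⟩)
      ?_ ?_ ?_ ?_
    · rintro ⟨⟨l, hl⟩, i⟩ hy
      obtain ⟨hv, hpl⟩ := Finset.mem_sigma.mp hy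
      obtain ⟨hM, hpc⟩ := mem_MotzP.mp hv
      simp only at hpl hM hpc ⊢
      have hp : isPlat l i := mem_Pl.mp hpl
      have h3 := isPlat_le hp
      have hi' : i ≤ (delP l i).length := by rw [length_delP h3]; omega
      rw [Finset.mem_sigma]
      constructor
      · rw [mem_MotzF]
        exact (isMotzkin_insP hi').mp (by rw [insP_delP hp]; exact hM)
      · simp only [Finset.mem_filter, Finset.mem_range]
        have hpcd := pc_insP hi'
        rw [insP_delP hp, hpc] at hpcd
        constructor
        · omega
        · omega
    · rintro ⟨⟨w, hw⟩, i⟩ hx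
      obtain ⟨hv, hifil⟩ := Finset.mem_sigma.mp hx
      have hM := mem_MotzF.mp hv
      simp only [Finset.mem_filter, Finset.mem_range] at hifil
      simp only at hM ⊢
      have hi : i ≤ w.length := by rw [hw]; omega
      rw [Finset.mem_sigma]
      constructor
      · rw [mem_MotzP]
        refine ⟨(isMotzkin_insP hi).mpr hM, ?_⟩
        rw [pc_insP hi, hifil.2]
        omega
      · rw [mem_Pl, isPlat_insP hi]
        exact Or.inr (Or.inl rfl)
    · rintro ⟨⟨l, hl⟩, i⟩ hy
      obtain ⟨hv, hpl⟩ := Finset.mem_sigma.mp hy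
      have hp : isPlat l i := mem_Pl.mp hpl
      simp only
      congr 1
      exact Subtype.ext (insP_delP hp)
    · rintro ⟨⟨w, hw⟩, i⟩ hx
      have hi : i ≤ w.length := by
        obtain ⟨_, hifil⟩ := Finset.mem_sigma.mp hx
        simp only [Finset.mem_filter, Finset.mem_range] at hifil
        rw [hw]; omega
      simp only
      congr 1
      exact Subtype.ext (delP_insP hi)
  rw [hbij, hT'] at hT
  rw [mul_comm]
  exact hT.symm
lemma pc_short {l : List Step} (h : l.length < 3) : plateauCount l = 0 := by
  rw [pc_eq, Finset.card_eq_zero, Finset.eq_empty_iff_forall_notMem]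
  intro j hj
  have := isPlat_le (mem_Pl.mp hj)
  omega

theorem plateau_recursion (n p : ℤ) (hp : 1 ≤ p) :
    p * (c n p : ℤ) = (n - 2 * p) * (c (n - 3) (p - 1) : ℤ) + 2 * p * (c (n - 3) p : ℤ) := by
  by_cases hn : 0 ≤ n
  · by_cases hn3 : 3 ≤ n
    · set m : ℕ := (n - 3).toNat with hm
      set P : ℕ := p.toNat with hPdef
      have hP1 : 1 ≤ P := by omega
      have hpP : ((P : ℤ)) = p := Int.toNat_of_nonneg (by omega)
      have hnm : n = (m : ℤ) + 3 := by omega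
      have e1 : c n p = (MotzP (m + 3) P).card := by
        rw [c, if_pos ⟨hn, by omega⟩, show n.toNat = m + 3 by omega, card_c]
      have e2 : c (n - 3) (p - 1) = (MotzP m (P - 1)).card := by
        rw [c, if_pos ⟨by omega, by omega⟩, show (n - 3).toNat = m by omega,
          show (p - 1).toNat = P - 1 by omega, card_c]
      have e3 : c (n - 3) p = (MotzP m P).card := by
        rw [c, if_pos ⟨by omega, by omega⟩, show (n - 3).toNat = m by omega, card_c]
      have key := main_nat m P hP1
      rw [e1, e2, e3]
      by_cases hc2 : (MotzP m (P - 1)).card = 0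
      · rw [hc2, Nat.mul_zero, Nat.zero_add] at key
        have key' := congrArg (Nat.cast : ℕ → ℤ) key
        push_cast at key'
        rw [hc2, hnm, ← hpP]
        push_cast
        linear_combination key'
      · have hle : 2 * (P - 1) ≤ m := by
          obtain ⟨v, hv⟩ := Finset.card_pos.mp (Nat.pos_of_ne_zero hc2)
          have h2 := two_pc_le v.1
          rw [(mem_MotzP.mp hv).2, v.2] at h2
          exact h2
        have key' := congrArg (Nat.cast : ℕ → ℤ) key
        push_cast [Nat.cast_sub (show 2 * (P - 1) ≤ m + 1 by omega), Nat.cast_sub hP1] at key'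
        rw [hnm, ← hpP]
        linear_combination key'
    · have h1 : c n p = 0 := by
        rw [c, if_pos ⟨hn, by omega⟩]
        rw [Nat.card_eq_zero]
        refine Or.inl ⟨?_⟩
        rintro ⟨l, hl, hM, hpc⟩
        have := pc_short (show l.length < 3 by omega)
        omega
      have h2 : c (n - 3) (p - 1) = 0 := by rw [c, if_neg (by omega)]
      have h3 : c (n - 3) p = 0 := by rw [c, if_neg (by omega)]
      rw [h1, h2, h3]
      push_cast
      ring
  · have h1 : c n p = 0 := by rw [c, if_neg (by omega)]
    have h2 : c (n - 3) (p - 1) = 0 := by rw [c, if_neg (by omega)]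
    have h3 : c (n - 3) p = 0 := by rw [c, if_neg (by omega)]
    rw [h1, h2, h3]
    push_cast
    ring
end

section
/- Let f₀(x) = Σ_{n≥0} c(n,0) x^n ∈ ℚ[[x]] be the generating function for Motzkin paths with no plateaus. Then (2x² f₀(x) - (1 - x + x³))² = (1 - x + x³)² - 4x² as formal power series; equivalently, f₀(x) = 1 + x·f₀(x) + x²·f₀(x)·(f₀(x) - x). -/
def noPlat (l : List Step) : Prop :=
  ∀ i : ℕ, (l.drop i).take 3 ≠ [Step.U, Step.H, Step.D]

lemma plateauCount_eq_zero_iff (l : List Step) : plateauCount l = 0 ↔ noPlat l := by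
  unfold plateauCount noPlat
  rw [Finset.card_eq_zero, Finset.filter_eq_empty_iff]
  constructor
  · intro h i hi
    by_cases hl : i < l.length
    · exact h (Finset.mem_range.mpr hl) hi
    · rw [List.drop_eq_nil_of_le (le_of_not_gt hl)] at hi
      simp at hi
  · intro h i _
    exact h i

lemma isMotzkin_prefix {l p : List Step} (h : IsMotzkin l) (hp : p <+: l) :
    p.count Step.D ≤ p.count Step.U := by
  rw [List.prefix_iff_eq_take.mp hp]; exact h.1 _

lemma motzkin_cons_H_iff {t : List Step} : IsMotzkin (Step.H :: t) ↔ IsMotzkin t := by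
  unfold IsMotzkin
  constructor
  · rintro ⟨h1, h2⟩
    refine ⟨fun k => ?_, ?_⟩
    · have := h1 (k + 1)
      simpa [List.count_cons] using this
    · simpa [List.count_cons] using h2
  · rintro ⟨h1, h2⟩
    refine ⟨fun k => ?_, ?_⟩
    · cases k with
      | zero => simp
      | succ k => simpa [List.count_cons] using h1 k
    · simpa [List.count_cons] using h2

lemma motzkin_not_D {t : List Step} : ¬ IsMotzkin (Step.D :: t) := by
  rintro ⟨h1, _⟩
  have := h1 1
  simp [List.count_cons] at this

lemma motzkin_compose {a b : List Step} (ha : IsMotzkin a) (hb : IsMotzkin b) :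
    IsMotzkin (Step.U :: a ++ Step.D :: b) := by
  constructor
  · intro k
    cases k with
    | zero => simp
    | succ j =>
      rw [show ((Step.U :: a ++ Step.D :: b).take (j+1)) = Step.U :: ((a ++ Step.D :: b).take j) from rfl, List.take_append]
      by_cases hj : j ≤ a.length
      · have h0 : j - a.length = 0 := by omega
        rw [h0]
        simp only [List.take_zero, List.append_nil, List.count_cons, List.count_append]
        have := ha.1 j
        simp
        omega
      · have h0 : j - a.length = (j - a.length - 1) + 1 := by omega
        rw [List.take_of_length_le (by omega), h0, List.take_succ_cons]
        have h2 := hb.1 (j - a.length - 1)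
        have h3 := ha.2
        simp [List.count_cons, List.count_append]
        omega
  · have h1 := ha.2; have h2 := hb.2
    simp [List.count_cons, List.count_append]
    omega

lemma motzkin_decomp {a b : List Step}
    (h : IsMotzkin (Step.U :: a ++ Step.D :: b)) (ha : IsMotzkin a) : IsMotzkin b := by
  constructor
  · intro k
    have := h.1 (1 + a.length + 1 + k)
    rw [show ((Step.U :: a ++ Step.D :: b).take (1 + a.length + 1 + k)) = Step.U :: ((a ++ Step.D :: b).take (a.length + 1 + k)) from by rw [show 1 + a.length + 1 + k = (a.length + 1 + k) + 1 by omega]; rfl] at this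
    rw [List.take_append, List.take_of_length_le (by omega),
      show a.length + 1 + k - a.length = k + 1 by omega,
      show (Step.D :: b).take (k+1) = Step.D :: b.take k from rfl] at this
    simp [List.count_cons, List.count_append] at this
    have h2 := ha.2
    omega
  · have h1 := h.2; have h2 := ha.2
    simp [List.count_cons, List.count_append] at h1
    omega

def splitAux : ℕ → List Step → List Step × List Step
  | _, [] => ([], [])
  | 0, Step.D :: t => ([], t)
  | (d+1), Step.D :: t => ((splitAux d t).1.cons Step.D, (splitAux d t).2)
  | d, Step.U :: t => ((splitAux (d+1) t).1.cons Step.U, (splitAux (d+1) t).2)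
  | d, Step.H :: t => ((splitAux d t).1.cons Step.H, (splitAux d t).2)

lemma splitAux_U (d : ℕ) (t : List Step) :
    splitAux d (Step.U :: t) = (Step.U :: (splitAux (d+1) t).1, (splitAux (d+1) t).2) := by
  cases d <;> rfl

lemma splitAux_H (d : ℕ) (t : List Step) :
    splitAux d (Step.H :: t) = (Step.H :: (splitAux d t).1, (splitAux d t).2) := by
  cases d <;> rfl

lemma splitAux_D0 (t : List Step) : splitAux 0 (Step.D :: t) = ([], t) := rfl

lemma splitAux_DS (e : ℕ) (t : List Step) :
    splitAux (e+1) (Step.D :: t) = (Step.D :: (splitAux e t).1, (splitAux e t).2) := rfl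

lemma cons_pre {x : Step} {p t : List Step} (hp : p <+: t) : (x :: p) <+: (x :: t) :=
  List.cons_prefix_cons.mpr ⟨rfl, hp⟩

lemma splitAux_eval : ∀ (a : List Step) (d : ℕ) (b : List Step),
    (∀ p, p <+: a → p.count Step.D ≤ p.count Step.U + d) →
    a.count Step.D = a.count Step.U + d →
    splitAux d (a ++ Step.D :: b) = (a, b) := by
  intro a
  induction a with
  | nil =>
    intro d b _ htot
    simp at htot
    subst htot
    simp [splitAux]
  | cons x t ih =>
    intro d b hpre htot
    cases x with
    | U =>
      rw [List.cons_append, splitAux_U, ih (d+1) b ?_ ?_]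
      · intro p hp
        have := hpre (Step.U :: p) (cons_pre hp)
        simp [List.count_cons] at this ⊢
        omega
      · simp [List.count_cons] at htot
        omega
    | H =>
      rw [List.cons_append, splitAux_H, ih d b ?_ ?_]
      · intro p hp
        have := hpre (Step.H :: p) (cons_pre hp)
        simp [List.count_cons] at this ⊢
        omega
      · simp [List.count_cons] at htot
        omega
    | D =>
      have hd : 1 ≤ d := by
        have := hpre [Step.D] (cons_pre List.nil_prefix)
        simpa using this
      obtain ⟨e, rfl⟩ : ∃ e, d = e + 1 := ⟨d - 1, by omega⟩
      rw [List.cons_append, splitAux_DS, ih e b ?_ ?_]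
      · intro p hp
        have := hpre (Step.D :: p) (cons_pre hp)
        simp [List.count_cons] at this ⊢
        omega
      · simp [List.count_cons] at htot
        omega

lemma splitAux_spec : ∀ (t : List Step) (d : ℕ),
    t.count Step.U + d < t.count Step.D →
    t = (splitAux d t).1 ++ Step.D :: (splitAux d t).2 ∧
    (splitAux d t).1.count Step.D = (splitAux d t).1.count Step.U + d ∧
    (∀ p, p <+: (splitAux d t).1 → p.count Step.D ≤ p.count Step.U + d) := by
  intro t
  induction t with
  | nil => intro d h; simp at h
  | cons x t ih =>
    intro d h
    cases x with
    | U =>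
      have h' : t.count Step.U + (d+1) < t.count Step.D := by
        simp [List.count_cons] at h; omega
      obtain ⟨e1, e2, e3⟩ := ih (d+1) h'
      rw [splitAux_U]
      refine ⟨by simpa using congrArg (List.cons Step.U) e1, ?_, ?_⟩
      · simp [List.count_cons]; omega
      · intro p hp
        rcases List.prefix_cons_iff.mp hp with rfl | ⟨q, rfl, hq⟩
        · simp
        · have := e3 q hq
          simp [List.count_cons]
          omega
    | H =>
      have h' : t.count Step.U + d < t.count Step.D := by
        simp [List.count_cons] at h; omega
      obtain ⟨e1, e2, e3⟩ := ih d h'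
      rw [splitAux_H]
      refine ⟨by simpa using congrArg (List.cons Step.H) e1, ?_, ?_⟩
      · simp [List.count_cons]; omega
      · intro p hp
        rcases List.prefix_cons_iff.mp hp with rfl | ⟨q, rfl, hq⟩
        · simp
        · have := e3 q hq
          simp [List.count_cons]
          omega
    | D =>
      cases d with
      | zero =>
        rw [splitAux_D0]
        exact ⟨rfl, by simp, by intro p hp; simp at hp; simp [hp]⟩
      | succ e =>
        have h' : t.count Step.U + e < t.count Step.D := by
          simp [List.count_cons] at h; omega
        obtain ⟨e1, e2, e3⟩ := ih e h'
        rw [splitAux_DS]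
        refine ⟨by simpa using congrArg (List.cons Step.D) e1, ?_, ?_⟩
        · simp [List.count_cons]; omega
        · intro p hp
          rcases List.prefix_cons_iff.mp hp with rfl | ⟨q, rfl, hq⟩
          · simp
          · have := e3 q hq
            simp [List.count_cons]
            omega

lemma noPlat_cons_H {t : List Step} (h : noPlat t) : noPlat (Step.H :: t) := by
  intro i
  cases i with
  | zero =>
    intro heq
    rw [List.drop_zero, show (Step.H :: t).take 3 = Step.H :: t.take 2 from rfl] at heq
    simp at heq
  | succ j => simpa using h j

lemma noPlat_of_cons {x : Step} {t : List Step} (h : noPlat (x :: t)) : noPlat t :=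
  fun i => by simpa using h (i+1)

lemma len2_pair {l : List Step} (h : l.length = 2) : ∃ x y, l = [x, y] := by
  match l, h with
  | [x, y], _ => exact ⟨x, y, rfl⟩

lemma len1_single {l : List Step} (h : l.length = 1) : ∃ x, l = [x] := by
  match l, h with
  | [x], _ => exact ⟨x, rfl⟩

lemma noPlat_compose {a b : List Step} (ha : IsMotzkin a) (hna : noPlat a) (hnb : noPlat b)
    (hne : a ≠ [Step.H]) : noPlat (Step.U :: a ++ Step.D :: b) := by
  intro i heq
  cases i with
  | zero =>
    rw [List.drop_zero] at heq
    match a, hne with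
    | [], _ => simp at heq
    | [x], hne =>
      simp at heq
      exact hne (by rw [heq])
    | x :: y :: t, _ =>
      simp at heq
      obtain ⟨hx, hy⟩ := heq
      have := isMotzkin_prefix ha (show [x, y] <+: x :: y :: t from ⟨t, rfl⟩)
      subst hx hy
      simp at this
  | succ j =>
    rw [show (Step.U :: a ++ Step.D :: b).drop (j+1) = (a ++ Step.D :: b).drop j from rfl,
        List.drop_append] at heq
    by_cases h1 : j + 3 ≤ a.length
    · rw [show j - a.length = 0 by omega, List.drop_zero,
        List.take_append_of_le_length (by simp; omega)] at heq
      exact hna j heq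
    · by_cases h2 : a.length < j
      · rw [List.drop_eq_nil_of_le (by omega),
          show j - a.length = (j - a.length - 1) + 1 by omega] at heq
        simp only [List.nil_append, List.drop_succ_cons] at heq
        exact hnb (j - a.length - 1) heq
      · -- a.length - 2 ≤ j ≤ a.length
        by_cases h3 : j = a.length
        · rw [List.drop_eq_nil_of_le (by omega), show j - a.length = 0 by omega,
            List.drop_zero] at heq
          simp at heq
        · by_cases h4 : j = a.length - 1
          · -- drop j a = [x]
            obtain ⟨x, hx⟩ := len1_single (l := a.drop j) (by simp; omega)
            rw [show j - a.length = 0 by omega, List.drop_zero, hx] at heq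
            simp at heq
          · -- j = a.length - 2
            obtain ⟨x, y, hxy⟩ := len2_pair (l := a.drop j) (by simp; omega)
            rw [show j - a.length = 0 by omega, List.drop_zero, hxy] at heq
            simp at heq
            obtain ⟨hx, hy⟩ := heq
            subst hx hy
            -- a = a.take j ++ [U, H]
            have hsplit : a = a.take j ++ [Step.U, Step.H] := by
              conv_lhs => rw [← List.take_append_drop j a]
              rw [hxy]
            have h5 := isMotzkin_prefix ha (List.take_prefix j a)
            have h6 := ha.2
            rw [hsplit] at h6
            simp [List.count_append, List.count_cons] at h6
            omega

lemma noPlat_decomp_left {a b : List Step} (h : noPlat (Step.U :: a ++ Step.D :: b)) :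
    noPlat a := by
  intro i heq
  have hl : i + 3 ≤ a.length := by
    have := congrArg List.length heq
    simp at this
    omega
  apply h (i+1)
  rw [show (Step.U :: a ++ Step.D :: b).drop (i+1) = (a ++ Step.D :: b).drop i from rfl,
      List.drop_append, show i - a.length = 0 by omega, List.drop_zero,
      List.take_append_of_le_length (by simp; omega)]
  exact heq

lemma noPlat_decomp_right {a b : List Step} (h : noPlat (Step.U :: a ++ Step.D :: b)) :
    noPlat b := by
  intro j heq
  apply h (a.length + 2 + j)
  rw [show a.length + 2 + j = (a.length + 1 + j) + 1 by omega, List.cons_append,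
      List.drop_succ_cons, List.drop_append, List.drop_eq_nil_of_le (by omega),
      show a.length + 1 + j - a.length = 1 + j by omega]
  rw [List.nil_append, show (1 + j) = j + 1 by omega, List.drop_succ_cons]
  exact heq

lemma compose_ne_H {a b : List Step} (h : noPlat (Step.U :: a ++ Step.D :: b)) :
    a ≠ [Step.H] := by
  rintro rfl
  exact h 0 rfl

-- counting layer
instance inst_s1 : Fintype Step :=
  ⟨{Step.U, Step.H, Step.D}, by intro x; cases x <;> simp⟩

def Mot (n : ℕ) := {l : List Step // l.length = n ∧ IsMotzkin l ∧ noPlat l}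
def Mot' (n : ℕ) := {l : List Step // (l.length = n ∧ IsMotzkin l ∧ noPlat l) ∧ l ≠ [Step.H]}

instance (n : ℕ) : Finite (Mot n) := by
  have h := (List.finite_length_eq Step n).to_subtype
  exact Finite.of_injective
    (fun x : Mot n => (⟨x.1, x.2.1⟩ : {l : List Step | l.length = n}))
    (by intro x y hxy; simp only [Subtype.mk.injEq] at hxy; exact Subtype.ext hxy)

instance (n : ℕ) : Finite (Mot' n) := by
  have h := (List.finite_length_eq Step n).to_subtype
  exact Finite.of_injective
    (fun x : Mot' n => (⟨x.1, x.2.1.1⟩ : {l : List Step | l.length = n}))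
    (by intro x y hxy; simp only [Subtype.mk.injEq] at hxy; exact Subtype.ext hxy)

def g (n : ℕ) : Mot n ⊕ (Σ k : Fin n, Mot' k.1 × Mot (n - 1 - k.1)) → Mot (n+1)
  | Sum.inl t => ⟨Step.H :: t.1,
      by simp [t.2.1], motzkin_cons_H_iff.mpr t.2.2.1, noPlat_cons_H t.2.2.2⟩
  | Sum.inr x => ⟨Step.U :: x.2.1.1 ++ Step.D :: x.2.2.1, by
      obtain ⟨k, ⟨a, ⟨ha1, ha2, ha3⟩, ha4⟩, ⟨b, hb1, hb2, hb3⟩⟩ := x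
      have hk := k.2
      refine ⟨?_, motzkin_compose ha2 hb2, noPlat_compose ha2 ha3 hb3 ha4⟩
      simp [ha1, hb1]
      omega⟩

lemma g_bij (n : ℕ) : Function.Bijective (g n) := by
  constructor
  · rintro (⟨t, ht⟩ | ⟨k, ⟨a, ha⟩, ⟨b, hb⟩⟩) (⟨t', ht'⟩ | ⟨k', ⟨a', ha'⟩, ⟨b', hb'⟩⟩) h
    · have hv : Step.H :: t = Step.H :: t' := congrArg Subtype.val h
      simp only [List.cons.injEq, true_and] at hv
      exact congrArg Sum.inl (Subtype.ext hv)
    · have hv : Step.H :: t = Step.U :: a' ++ Step.D :: b' := congrArg Subtype.val h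
      simp at hv
    · have hv : Step.U :: a ++ Step.D :: b = Step.H :: t' := congrArg Subtype.val h
      simp at hv
    · have hv : Step.U :: a ++ Step.D :: b = Step.U :: a' ++ Step.D :: b' :=
        congrArg Subtype.val h
      injection hv with hv1 hv2
      have e := splitAux_eval a 0 b
        (fun p hp => by simpa using isMotzkin_prefix ha.1.2.1 hp)
        (by have := ha.1.2.1.2; omega)
      have e' := splitAux_eval a' 0 b'
        (fun p hp => by simpa using isMotzkin_prefix ha'.1.2.1 hp)
        (by have := ha'.1.2.1.2; omega)
      have hv3 : a ++ Step.D :: b = a' ++ Step.D :: b' := hv2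
      rw [hv3, e'] at e
      injection e with e1 e2
      subst e1
      subst e2
      obtain rfl : k = k' := Fin.ext (by rw [← ha.1.1, ← ha'.1.1])
      rfl
  · rintro ⟨l, hlen, hmot, hnop⟩
    rcases l with _ | ⟨x, t⟩
    · simp at hlen
    cases x with
    | H =>
      exact ⟨Sum.inl ⟨t, by simpa using hlen, motzkin_cons_H_iff.mp hmot, noPlat_of_cons hnop⟩,
        rfl⟩
    | D => exact absurd hmot motzkin_not_D
    | U =>
      have hcnt : t.count Step.U + 0 < t.count Step.D := by
        have := hmot.2
        simp [List.count_cons] at this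
        omega
      obtain ⟨e1, e2, e3⟩ := splitAux_spec t 0 hcnt
      set a := (splitAux 0 t).1 with hA
      set b := (splitAux 0 t).2 with hB
      rw [e1] at hmot hnop
      have hamot : IsMotzkin a :=
        ⟨fun k => by simpa using e3 _ (List.take_prefix k a), by omega⟩
      have hbmot : IsMotzkin b := motzkin_decomp hmot hamot
      have hlen' : a.length + 1 + b.length = n := by
        have := congrArg List.length e1
        simp at this hlen
        omega
      refine ⟨Sum.inr ⟨⟨a.length, by omega⟩,
        ⟨a, ⟨⟨rfl, hamot, noPlat_decomp_left hnop⟩, compose_ne_H hnop⟩⟩,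
        ⟨b, ⟨by simp; omega, hbmot, noPlat_decomp_right hnop⟩⟩⟩, ?_⟩
      exact Subtype.ext (by simp [g]; rw [← e1])

lemma len1_single' {l : List Step} (h : l.length = 1) : ∃ x, l = [x] := by
  match l, h with
  | [x], _ => exact ⟨x, rfl⟩

lemma motzkin_nil : IsMotzkin [] := ⟨fun k => by simp, by simp⟩

lemma noPlat_nil : noPlat [] := fun i => by simp

lemma motzkin_single_H : IsMotzkin [Step.H] :=
  ⟨fun k => by rcases k with _ | k <;> simp [List.count_cons], by simp [List.count_cons]⟩

lemma noPlat_single_H : noPlat [Step.H] := by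
  intro i heq
  rcases i with _ | i <;> simp at heq

lemma card_mot_zero : Nat.card (Mot 0) = 1 := by
  haveI : Unique (Mot 0) :=
    { default := ⟨[], rfl, motzkin_nil, noPlat_nil⟩
      uniq := fun x => Subtype.ext (List.length_eq_zero_iff.mp x.2.1) }
  exact Nat.card_unique

lemma mot_one_eq (x : Mot 1) : x.1 = [Step.H] := by
  obtain ⟨y, hy⟩ := len1_single' x.2.1
  have hm := x.2.2.1.2
  rw [hy] at hm
  cases y with
  | U => simp [List.count_cons] at hm
  | D => simp [List.count_cons] at hm
  | H => exact hy

lemma card_mot_one : Nat.card (Mot 1) = 1 := by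
  haveI : Unique (Mot 1) :=
    { default := ⟨[Step.H], rfl, motzkin_single_H, noPlat_single_H⟩
      uniq := fun x => Subtype.ext (mot_one_eq x) }
  exact Nat.card_unique

lemma card_mot'_one : Nat.card (Mot' 1) = 0 := by
  haveI : IsEmpty (Mot' 1) := by
    constructor
    rintro ⟨l, ⟨h1, h2, h3⟩, h4⟩
    exact h4 (mot_one_eq ⟨l, h1, h2, h3⟩)
  exact Nat.card_of_isEmpty

lemma card_mot'_ne {k : ℕ} (hk : k ≠ 1) : Nat.card (Mot' k) = Nat.card (Mot k) := by
  apply Nat.card_congr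
  apply Equiv.subtypeEquivRight
  intro l
  constructor
  · exact fun h => h.1
  · intro h
    refine ⟨h, fun he => ?_⟩
    rw [he] at h
    exact hk (h.1.symm ▸ rfl)

lemma card_succ (n : ℕ) :
    Nat.card (Mot (n+1)) = Nat.card (Mot n) +
      ∑ k ∈ Finset.range n, Nat.card (Mot' k) * Nat.card (Mot (n-1-k)) := by
  classical
  rw [← Nat.card_eq_of_bijective (g n) (g_bij n), Nat.card_sum]
  congr 1
  letI : ∀ k : Fin n, Fintype (Mot' k.1 × Mot (n-1-k.1)) := fun k => Fintype.ofFinite _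
  rw [Nat.card_eq_fintype_card, Fintype.card_sigma,
    ← Fin.sum_univ_eq_sum_range (fun k => Nat.card (Mot' k) * Nat.card (Mot (n-1-k)))]
  refine Finset.sum_congr rfl fun k _ => ?_
  rw [← Nat.card_eq_fintype_card, Nat.card_prod]

noncomputable def aq (n : ℕ) : ℚ := (Nat.card (Mot n) : ℚ)

lemma aq_rec (n : ℕ) : aq (n+1) = aq n +
    ∑ k ∈ Finset.range n, (aq k - if k = 1 then 1 else 0) * aq (n-1-k) := by
  have h := card_succ n
  have : ∀ k : ℕ, ((Nat.card (Mot' k) : ℚ)) = aq k - if k = 1 then 1 else 0 := by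
    intro k
    by_cases hk : k = 1
    · subst hk
      simp [card_mot'_one, aq, card_mot_one]
    · simp [card_mot'_ne hk, aq, hk]
  calc aq (n+1) = ((Nat.card (Mot n) + ∑ k ∈ Finset.range n,
        Nat.card (Mot' k) * Nat.card (Mot (n-1-k)) : ℕ) : ℚ) := by rw [aq, h]
    _ = _ := by
        push_cast
        rw [Finset.sum_congr rfl fun k _ => by rw [this k]]
        rfl

open PowerSeries in
lemma key_eq : (PowerSeries.mk (fun n => aq n) : PowerSeries ℚ)
    = 1 + X * PowerSeries.mk (fun n => aq n)
      + X^2 * PowerSeries.mk (fun n => aq n) * (PowerSeries.mk (fun n => aq n) - X) := by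
  ext n
  rw [mul_assoc (X^2 : PowerSeries ℚ)]
  simp only [map_add, PowerSeries.coeff_mk, PowerSeries.coeff_one]
  rcases n with _ | n
  · rw [PowerSeries.coeff_zero_X_mul, PowerSeries.coeff_X_pow_mul']
    simp [aq, card_mot_zero]
  rcases n with _ | m
  · rw [show (1 : ℕ) = 0 + 1 from rfl, PowerSeries.coeff_succ_X_mul,
      PowerSeries.coeff_X_pow_mul', if_neg (by omega), PowerSeries.coeff_mk]
    simp [aq, card_mot_zero, card_mot_one]
  · have e1 : (PowerSeries.coeff (R := ℚ) (m+1+1)) (X * PowerSeries.mk (fun n => aq n)) = aq (m+1) := by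
      rw [PowerSeries.coeff_succ_X_mul, PowerSeries.coeff_mk]
    have e2 : (PowerSeries.coeff (R := ℚ) (m+1+1)) ((X^2 : PowerSeries ℚ) *
        (PowerSeries.mk (fun n => aq n) * (PowerSeries.mk (fun n => aq n) - X)))
        = ∑ k ∈ Finset.range (m+1), aq k * (aq (m-k) - if m - k = 1 then 1 else 0) := by
      rw [show m+1+1 = m+2 by omega, PowerSeries.coeff_X_pow_mul, PowerSeries.coeff_mul,
        Finset.Nat.sum_antidiagonal_eq_sum_range_succ_mk]
      refine Finset.sum_congr rfl fun k hk => ?_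
      rw [PowerSeries.coeff_mk, map_sub, PowerSeries.coeff_mk, PowerSeries.coeff_X]
    rw [e1, e2, if_neg (show ¬ (m+1+1 = 0) by omega)]
    have hrec := aq_rec (m+1)
    have hsum : ∑ k ∈ Finset.range (m+1), aq k * (aq (m-k) - if m - k = 1 then 1 else 0)
        = ∑ k ∈ Finset.range (m+1), (aq k - if k = 1 then 1 else 0) * aq (m+1-1-k) := by
      rw [← Finset.sum_range_reflect
        (fun j => (aq j - if j = 1 then 1 else 0) * aq (m+1-1-j)) (m+1)]
      refine Finset.sum_congr rfl fun j hj => ?_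
      have hj' : j ≤ m := by
        have := Finset.mem_range.mp hj
        omega
      rw [show m+1-1-j = m-j by omega, show m+1-1-(m-j) = j by omega]
      ring
    rw [hsum]
    rw [hrec]
    ring


open PowerSeries in
theorem plateau_free_gf :
    (2 * X ^ 2 * PowerSeries.mk (fun n => (c n 0 : ℚ)) - (1 - X + X ^ 3)) ^ 2
        = (1 - X + X ^ 3) ^ 2 - 4 * X ^ 2 ∧
      PowerSeries.mk (fun n => (c n 0 : ℚ))
        = 1 + X * PowerSeries.mk (fun n => (c n 0 : ℚ))
          + X ^ 2 * PowerSeries.mk (fun n => (c n 0 : ℚ))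
            * (PowerSeries.mk (fun n => (c n 0 : ℚ)) - X) := by
  have hc : ∀ n : ℕ, (c (n : ℤ) 0 : ℚ) = aq n := by
    intro n
    rw [c, if_pos ⟨Int.natCast_nonneg n, le_refl (0:ℤ)⟩]
    have hcard : Nat.card {l : List Step // l.length = ((n : ℤ)).toNat ∧ IsMotzkin l ∧
        plateauCount l = ((0 : ℤ)).toNat} = Nat.card (Mot n) := by
      apply Nat.card_congr
      apply Equiv.subtypeEquivRight
      intro l
      rw [Int.toNat_natCast]
      constructor
      · rintro ⟨h1, h2, h3⟩
        exact ⟨h1, h2, (plateauCount_eq_zero_iff l).mp (by simpa using h3)⟩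
      · rintro ⟨h1, h2, h3⟩
        exact ⟨h1, h2, by simpa using (plateauCount_eq_zero_iff l).mpr h3⟩
    rw [hcard]
    rfl
  have hf : (PowerSeries.mk (fun n => (c n 0 : ℚ)) : PowerSeries ℚ)
      = PowerSeries.mk (fun n => aq n) := by
    ext n
    rw [PowerSeries.coeff_mk, PowerSeries.coeff_mk, hc]
  rw [hf]
  refine ⟨?_, key_eq⟩
  have hkey := key_eq
  linear_combination (-4 * (X : PowerSeries ℚ)^2) * hkey
end

section
/- For each integer p ≥ 0 let f_p(x) = Σ_{n≥0} c(n,p) x^n ∈ ℚ[[x]]. Then for every p ≥ 1, p·(1 - 2x³)·f_p(x) = x·(d/dx)[x³·f_{p-1}(x)] - 2p·x³·f_{p-1}(x), where d/dx denotes the formal derivative of power series. -/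
namespace Aux

instance : Fintype Step :=
  ⟨{Step.U, Step.H, Step.D}, by intro x; cases x <;> simp⟩

/-- All lists of steps of length `n`. -/
def allLists : ℕ → Finset (List Step)
  | 0 => {[]}
  | n + 1 => ((Finset.univ : Finset Step) ×ˢ allLists n).image (fun x => x.1 :: x.2)

lemma mem_allLists (n : ℕ) (l : List Step) : l ∈ allLists n ↔ l.length = n := by
  induction n generalizing l with
  | zero => cases l <;> simp [allLists]
  | succ n ih =>
    cases l with
    | nil => simp [allLists]
    | cons a t => simp [allLists, ih]

lemma isMotzkin_iff (l : List Step) :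
    IsMotzkin l ↔ ((∀ k ∈ Finset.range (l.length + 1),
      (l.take k).count Step.D ≤ (l.take k).count Step.U) ∧
      l.count Step.U = l.count Step.D) := by
  constructor
  · rintro ⟨h1, h2⟩; exact ⟨fun k _ => h1 k, h2⟩
  · rintro ⟨h1, h2⟩
    refine ⟨fun k => ?_, h2⟩
    rcases le_or_gt k l.length with h | h
    · exact h1 k (Finset.mem_range.mpr (by omega))
    · rw [List.take_of_length_le h.le]
      simpa [h2.symm] using h1 l.length (by simp)

instance decIsMotzkin (l : List Step) : Decidable (IsMotzkin l) :=
  decidable_of_iff _ (isMotzkin_iff l).symm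

/-- Motzkin paths of length `n` with `p` plateaus, as a Finset. -/
def cF (n p : ℕ) : Finset (List Step) :=
  (allLists n).filter (fun l => IsMotzkin l ∧ plateauCount l = p)

lemma c_eq (n p : ℕ) : c (n : ℤ) (p : ℤ) = (cF n p).card := by
  rw [c, if_pos ⟨Int.natCast_nonneg n, Int.natCast_nonneg p⟩]
  have e : {l : List Step // l.length = ((n : ℤ)).toNat ∧ IsMotzkin l ∧
      plateauCount l = ((p : ℤ)).toNat} ≃ {l : List Step // l ∈ cF n p} :=
    Equiv.subtypeEquivRight (by
      intro l
      simp [cF, Finset.mem_filter, mem_allLists, and_assoc])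
  rw [Nat.card_congr e, Nat.card_eq_fintype_card, Fintype.card_coe]


open Step

/-- plateau at position `k`. -/
def Plat (l : List Step) (k : ℕ) : Prop := (l.drop k).take 3 = [U, H, D]

lemma take_three (d : List Step) (x y z : Step) :
    d.take 3 = [x, y, z] ↔ d[0]? = some x ∧ d[1]? = some y ∧ d[2]? = some z := by
  match d with
  | [] => simp
  | [a] => simp
  | [a, b] => simp
  | a :: b :: e :: t => simp [List.take]

lemma plat_iff (l : List Step) (k : ℕ) :
    Plat l k ↔ l[k]? = some U ∧ l[k + 1]? = some H ∧ l[k + 2]? = some D := by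
  rw [Plat, take_three]
  have h0 : (l.drop k)[0]? = l[k]? := by rw [List.getElem?_drop]; ring_nf
  have h1 : (l.drop k)[1]? = l[k + 1]? := by rw [List.getElem?_drop]
  have h2 : (l.drop k)[2]? = l[k + 2]? := by rw [List.getElem?_drop]
  rw [h0, h1, h2]

lemma Plat.lt_length {l : List Step} {k : ℕ} (h : Plat l k) : k + 3 ≤ l.length := by
  rw [plat_iff] at h
  have := (List.getElem?_eq_some_iff.mp h.2.2).1
  omega

def platFinset (l : List Step) : Finset ℕ :=
  (Finset.range l.length).filter (fun i => (l.drop i).take 3 = [U, H, D])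

lemma plateauCount_eq (l : List Step) : plateauCount l = (platFinset l).card := rfl

lemma mem_platFinset (l : List Step) (k : ℕ) : k ∈ platFinset l ↔ Plat l k := by
  rw [platFinset, Finset.mem_filter, Finset.mem_range]
  constructor
  · exact fun h => h.2
  · intro h; exact ⟨by have := h.lt_length; omega, h⟩

/-- Plateaus are at least 3 apart. -/
lemma plat_apart {l : List Step} {k k' : ℕ} (h : Plat l k) (h' : Plat l k')
    (hne : k ≠ k') : k + 3 ≤ k' ∨ k' + 3 ≤ k := by
  rw [plat_iff] at h h'
  by_contra hc
  push_neg at hc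
  rcases Nat.lt_or_ge k k' with hlt | hge
  · have : k' = k + 1 ∨ k' = k + 2 := by omega
    rcases this with rfl | rfl
    · exact absurd (h.2.1.symm.trans h'.1) (by simp)
    · exact absurd (h.2.2.symm.trans h'.1) (by simp)
  · have : k = k' + 1 ∨ k = k' + 2 := by omega
    rcases this with rfl | rfl
    · exact absurd (h'.2.1.symm.trans h.1) (by simp)
    · exact absurd (h'.2.2.symm.trans h.1) (by simp)

def ins (σ : List Step) (j : ℕ) : List Step := σ.take j ++ ([U, H, D] ++ σ.drop j)

def rem (l : List Step) (i : ℕ) : List Step := l.take i ++ l.drop (i + 3)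

lemma ins_length (σ : List Step) (j : ℕ) (hj : j ≤ σ.length) :
    (ins σ j).length = σ.length + 3 := by
  simp [ins]; omega

lemma ins_getElem (σ : List Step) (j k : ℕ) (hj : j ≤ σ.length) :
    (ins σ j)[k]? = if k < j then σ[k]?
      else if k < j + 3 then [U, H, D][k - j]? else σ[k - 3]? := by
  have hlen : (σ.take j).length = j := by simp; omega
  split_ifs with h1 h2
  · rw [ins, List.getElem?_append_left (by omega), List.getElem?_take_of_lt h1]
  · rw [ins, List.getElem?_append_right (by omega), hlen,
      List.getElem?_append_left (by simp; omega)]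
  · rw [ins, List.getElem?_append_right (by omega), hlen,
      List.getElem?_append_right (by simp; omega), List.getElem?_drop]
    congr 1
    simp
    omega

lemma plat_ins (σ : List Step) (j k : ℕ) (hj : j ≤ σ.length) :
    Plat (ins σ j) k ↔ (k + 3 ≤ j ∧ Plat σ k) ∨ k = j ∨ (j + 3 ≤ k ∧ Plat σ (k - 3)) := by
  rw [plat_iff, plat_iff, plat_iff,
    ins_getElem σ j k hj, ins_getElem σ j (k + 1) hj, ins_getElem σ j (k + 2) hj]
  rcases show k + 3 ≤ j ∨ k + 2 = j ∨ k + 1 = j ∨ k = j ∨ k = j + 1 ∨ k = j + 2 ∨ j + 3 ≤ k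
      by omega with h | h | h | h | h | h | h
  · have n1 : k ≠ j := by omega
    have n2 : ¬ (j + 3 ≤ k) := by omega
    simp only [if_pos (show k < j by omega), if_pos (show k + 1 < j by omega),
      if_pos (show k + 2 < j by omega)]
    simp [h, n1, n2]
  · have e : k + 2 - j = 0 := by omega
    simp only [if_pos (show k < j by omega), if_pos (show k + 1 < j by omega),
      if_neg (show ¬ k + 2 < j by omega), if_pos (show k + 2 < j + 3 by omega), e]
    simp
    omega
  · have e : k + 1 - j = 0 := by omega
    simp only [if_pos (show k < j by omega), if_neg (show ¬ k + 1 < j by omega),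
      if_pos (show k + 1 < j + 3 by omega), e]
    simp
    omega
  · subst h
    have e1 : k + 1 - k = 1 := by omega
    have e2 : k + 2 - k = 2 := by omega
    simp only [if_neg (show ¬ k < k by omega), if_pos (show k < k + 3 by omega),
      if_neg (show ¬ k + 1 < k by omega), if_pos (show k + 1 < k + 3 by omega),
      if_neg (show ¬ k + 2 < k by omega), if_pos (show k + 2 < k + 3 by omega),
      Nat.sub_self, e1, e2]
    simp
  · have e : k - j = 1 := by omega
    simp only [if_neg (show ¬ k < j by omega), if_pos (show k < j + 3 by omega), e]
    simp
    omega
  · have e : k - j = 2 := by omega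
    simp only [if_neg (show ¬ k < j by omega), if_pos (show k < j + 3 by omega), e]
    simp
    omega
  · have e1 : k + 1 - 3 = k - 3 + 1 := by omega
    have e2 : k + 2 - 3 = k - 3 + 2 := by omega
    have n1 : k ≠ j := by omega
    have n2 : ¬ (k + 3 ≤ j) := by omega
    simp only [if_neg (show ¬ k < j by omega), if_neg (show ¬ k < j + 3 by omega),
      if_neg (show ¬ k + 1 < j by omega), if_neg (show ¬ k + 1 < j + 3 by omega),
      if_neg (show ¬ k + 2 < j by omega), if_neg (show ¬ k + 2 < j + 3 by omega), e1, e2]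
    simp [h, n1, n2]

lemma take_ins_le (σ : List Step) (j k : ℕ) (hj : j ≤ σ.length) (hk : k ≤ j) :
    (ins σ j).take k = σ.take k := by
  rw [ins, List.take_append]
  have : (σ.take j).length = j := by simp; omega
  rw [this, Nat.sub_eq_zero_of_le hk, List.take_zero, List.append_nil,
    List.take_take, Nat.min_eq_left hk]

lemma take_ins_ge (σ : List Step) (j k : ℕ) (hj : j ≤ σ.length) (hk : j + 3 ≤ k) :
    (ins σ j).take k = σ.take j ++ ([U, H, D] ++ (σ.drop j).take (k - j - 3)) := by
  have h1 : (σ.take j).length = j := by simp; omega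
  rw [ins, List.take_append, h1, List.take_take, Nat.min_eq_right (by omega),
    List.take_append]
  have hm3 : ([U, H, D] : List Step).length = 3 := rfl
  rw [show ([U, H, D] : List Step).take (k - j) = [U, H, D] from
    List.take_of_length_le (by rw [hm3]; omega), hm3]

lemma count_take_ins_ge (σ : List Step) (j k : ℕ) (hj : j ≤ σ.length) (hk : j + 3 ≤ k)
    (s : Step) :
    ((ins σ j).take k).count s = (σ.take (k - 3)).count s + ([U, H, D] : List Step).count s := by
  rw [take_ins_ge σ j k hj hk]
  have : σ.take (k - 3) = σ.take j ++ (σ.drop j).take (k - 3 - j) := by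
    rw [← List.take_add (l := σ) (i := j) (j := k - 3 - j)]
    congr 1
    omega
  have e : k - j - 3 = k - 3 - j := by omega
  rw [this, e, List.count_append, List.count_append, List.count_append]
  omega

lemma count_ins (σ : List Step) (j : ℕ) (s : Step) :
    (ins σ j).count s = σ.count s + ([U, H, D] : List Step).count s := by
  have : σ.count s = (σ.take j).count s + (σ.drop j).count s := by
    rw [← List.count_append, List.take_append_drop]
  rw [ins, List.count_append, List.count_append, this]
  omega

lemma isMotzkin_ins_iff (σ : List Step) (j : ℕ) (hj : j ≤ σ.length) :
    IsMotzkin (ins σ j) ↔ IsMotzkin σ := by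
  constructor
  · rintro ⟨h1, h2⟩
    constructor
    · intro k
      rcases le_or_gt k j with hk | hk
      · have := h1 k
        rwa [take_ins_le σ j k hj hk] at this
      · have := h1 (k + 3)
        rw [count_take_ins_ge σ j (k + 3) hj (by omega) Step.D,
          count_take_ins_ge σ j (k + 3) hj (by omega) Step.U] at this
        have c1 : ([U, H, D] : List Step).count Step.U = 1 := by decide
        have c2 : ([U, H, D] : List Step).count Step.D = 1 := by decide
        simp only [Nat.add_sub_cancel] at this
        omega
    · have hU := count_ins σ j Step.U
      have hD := count_ins σ j Step.D
      simp at hU hD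
      omega
  · rintro ⟨h1, h2⟩
    constructor
    · intro k
      rcases le_or_gt k j with hk | hk
      · rw [take_ins_le σ j k hj hk]; exact h1 k
      · rcases le_or_gt (j + 3) k with hk3 | hk3
        · rw [count_take_ins_ge σ j k hj hk3 Step.D, count_take_ins_ge σ j k hj hk3 Step.U]
          have := h1 (k - 3)
          simp
          omega
        · -- k = j + 1 or j + 2
          have hts : (ins σ j).take k = σ.take j ++ ([U, H, D].take (k - j)) := by
            rw [ins, List.take_append]
            have h1' : (σ.take j).length = j := by simp; omega
            rw [h1', List.take_take, Nat.min_eq_right (by omega),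
              List.take_append]
            have : k - j - ([U, H, D] : List Step).length = 0 := by simp; omega
            rw [this, List.take_zero, List.append_nil]
          rw [hts]
          have hcnt : ∀ s : Step, (([U, H, D] : List Step).take (k - j)).count Step.D ≤
              (([U, H, D] : List Step).take (k - j)).count Step.U := by
            intro s
            have : k - j = 1 ∨ k - j = 2 := by omega
            rcases this with h | h <;> rw [h] <;> decide
          have hj' := h1 j
          have hc := hcnt Step.U
          rw [List.count_append, List.count_append]
          omega
    · have hU := count_ins σ j Step.U
      have hD := count_ins σ j Step.D
      simp at hU hD
      omega

lemma rem_ins (σ : List Step) (j : ℕ) (hj : j ≤ σ.length) : rem (ins σ j) j = σ := by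
  have h1 : (σ.take j).length = j := by simp; omega
  rw [rem, take_ins_le σ j j hj le_rfl, ins, List.drop_append, h1,
    List.drop_of_length_le (show (σ.take j).length ≤ j + 3 by omega),
    List.drop_append]
  have h2 : ([U, H, D] : List Step).length = 3 := rfl
  rw [h2, List.drop_of_length_le (show 3 ≤ j + 3 - j by omega)]
  have e : j + 3 - j - 3 = 0 := by omega
  rw [e, List.drop_zero]
  simp

lemma ins_rem (l : List Step) (i : ℕ) (h : Plat l i) (hlen : i + 3 ≤ l.length) :
    ins (rem l i) i = l := by
  have h1 : (l.take i).length = i := by simp; omega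
  have hd : l.drop i = [U, H, D] ++ l.drop (i + 3) := by
    conv_lhs => rw [← List.take_append_drop 3 (l.drop i)]
    rw [Plat] at h
    rw [h, List.drop_drop]
  rw [ins, rem, List.take_append, h1, Nat.sub_self, List.take_zero,
    List.append_nil, List.take_take, Nat.min_self, List.drop_append, h1,
    List.drop_of_length_le (le_of_eq h1), Nat.sub_self, List.drop_zero, List.nil_append]
  conv_rhs => rw [← List.take_append_drop i l, hd]

lemma rem_length (l : List Step) (i : ℕ) (hlen : i + 3 ≤ l.length) :
    (rem l i).length = l.length - 3 := by
  rw [rem]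
  simp
  omega

end Aux

namespace Aux
open Step

/-- the "interior" positions of plateaus of σ -/
def interior (σ : List Step) : Finset ℕ :=
  (platFinset σ).biUnion (fun k => {k + 1, k + 2})

lemma mem_interior (σ : List Step) (j : ℕ) :
    j ∈ interior σ ↔ ∃ k, Plat σ k ∧ k < j ∧ j < k + 3 := by
  simp only [interior, Finset.mem_biUnion, Finset.mem_insert, Finset.mem_singleton,
    mem_platFinset]
  constructor
  · rintro ⟨k, hk, h | h⟩ <;> exact ⟨k, hk, by omega⟩
  · rintro ⟨k, hk, h1, h2⟩
    exact ⟨k, hk, by omega⟩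

lemma card_interior (σ : List Step) : (interior σ).card = 2 * plateauCount σ := by
  rw [interior, Finset.card_biUnion, plateauCount_eq]
  · rw [Finset.sum_congr rfl (fun k _ => by
      rw [Finset.card_insert_of_notMem (by simp), Finset.card_singleton])]
    rw [Finset.sum_const, smul_eq_mul]
    ring
  · intro k hk k' hk' hne
    rw [Finset.mem_coe, mem_platFinset] at hk hk'
    have := plat_apart hk hk' hne
    simp only [Finset.disjoint_left, Finset.mem_insert, Finset.mem_singleton]
    rintro a (rfl | rfl) <;> simp <;> omega

lemma interior_subset (σ : List Step) : interior σ ⊆ Finset.range (σ.length + 1) := by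
  intro j hj
  rw [mem_interior] at hj
  obtain ⟨k, hk, h1, h2⟩ := hj
  have := hk.lt_length
  rw [Finset.mem_range]
  omega

/-- destroyed-plateau count for insertion at j -/
def dcnt (σ : List Step) (j : ℕ) : ℕ :=
  ((platFinset σ).filter (fun k => k < j ∧ j < k + 3)).card

lemma dcnt_le_one (σ : List Step) (j : ℕ) : dcnt σ j ≤ 1 := by
  rw [dcnt]
  apply Finset.card_le_one.mpr
  intro a ha b hb
  simp only [Finset.mem_filter, mem_platFinset] at ha hb
  by_contra hne
  rcases plat_apart ha.1 hb.1 hne with h | h <;> omega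

lemma dcnt_eq_zero_iff (σ : List Step) (j : ℕ) : dcnt σ j = 0 ↔ j ∉ interior σ := by
  rw [dcnt, Finset.card_eq_zero, Finset.filter_eq_empty_iff]
  constructor
  · intro h hj
    rw [mem_interior] at hj
    obtain ⟨k, hk, h1, h2⟩ := hj
    exact h ((mem_platFinset σ k).mpr hk) ⟨h1, h2⟩
  · intro h k hk hc
    exact h ((mem_interior σ j).mpr ⟨k, (mem_platFinset σ k).mp hk, hc.1, hc.2⟩)

lemma plateau_ins (σ : List Step) (j : ℕ) (hj : j ≤ σ.length) :
    plateauCount (ins σ j) + dcnt σ j = plateauCount σ + 1 := by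
  classical
  have hPcard : (platFinset σ).card =
      ((platFinset σ).filter (fun k => k + 3 ≤ j)).card
        + ((platFinset σ).filter (fun k => j ≤ k)).card
        + ((platFinset σ).filter (fun k => k < j ∧ j < k + 3)).card := by
    have h1 : platFinset σ = (platFinset σ).filter (fun k => k + 3 ≤ j)
        ∪ (platFinset σ).filter (fun k => j ≤ k)
        ∪ (platFinset σ).filter (fun k => k < j ∧ j < k + 3) := by
      ext k
      simp only [Finset.mem_union, Finset.mem_filter]
      constructor
      · intro hk
        rcases show k + 3 ≤ j ∨ j ≤ k ∨ (k < j ∧ j < k + 3) by omega with h | h | h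
        · exact Or.inl (Or.inl ⟨hk, h⟩)
        · exact Or.inl (Or.inr ⟨hk, h⟩)
        · exact Or.inr ⟨hk, h⟩
      · rintro ((h | h) | h) <;> exact h.1
    have d1 : Disjoint ((platFinset σ).filter (fun k => k + 3 ≤ j))
        ((platFinset σ).filter (fun k => j ≤ k)) := by
      simp only [Finset.disjoint_left, Finset.mem_filter]
      rintro a ⟨_, h1⟩ ⟨_, h2⟩; omega
    have d2 : Disjoint ((platFinset σ).filter (fun k => k + 3 ≤ j)
          ∪ (platFinset σ).filter (fun k => j ≤ k))
        ((platFinset σ).filter (fun k => k < j ∧ j < k + 3)) := by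
      simp only [Finset.disjoint_left, Finset.mem_union, Finset.mem_filter]
      rintro a (⟨_, h1⟩ | ⟨_, h1⟩) ⟨_, h2⟩ <;> omega
    rw [← Finset.card_union_of_disjoint d1, ← Finset.card_union_of_disjoint d2, ← h1]
  have hIns : platFinset (ins σ j) = ((platFinset σ).filter (fun k => k + 3 ≤ j) ∪ {j})
      ∪ ((platFinset σ).filter (fun k => j ≤ k)).image (· + 3) := by
    ext k
    rw [mem_platFinset, plat_ins σ j k hj]
    simp only [Finset.mem_union, Finset.mem_singleton, Finset.mem_image,
      Finset.mem_filter, mem_platFinset]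
    constructor
    · rintro (⟨h1, h2⟩ | h | ⟨h1, h2⟩)
      · exact Or.inl (Or.inl ⟨h2, h1⟩)
      · exact Or.inl (Or.inr h)
      · exact Or.inr ⟨k - 3, ⟨h2, by omega⟩, by omega⟩
    · rintro ((⟨h1, h2⟩ | h) | ⟨a, ⟨ha1, ha2⟩, rfl⟩)
      · exact Or.inl ⟨h2, h1⟩
      · exact Or.inr (Or.inl h)
      · refine Or.inr (Or.inr ⟨by omega, ?_⟩)
        simpa using ha1
  have hcard2 : plateauCount (ins σ j) = ((platFinset σ).filter (fun k => k + 3 ≤ j)).card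
      + 1 + ((platFinset σ).filter (fun k => j ≤ k)).card := by
    rw [plateauCount_eq, hIns]
    have d1 : Disjoint ((platFinset σ).filter (fun k => k + 3 ≤ j)) ({j} : Finset ℕ) := by
      simp only [Finset.disjoint_left, Finset.mem_filter, Finset.mem_singleton]
      rintro a ⟨_, h1⟩ h2; omega
    have d2 : Disjoint ((platFinset σ).filter (fun k => k + 3 ≤ j) ∪ {j})
        (((platFinset σ).filter (fun k => j ≤ k)).image (· + 3)) := by
      simp only [Finset.disjoint_left, Finset.mem_union, Finset.mem_filter,
        Finset.mem_singleton, Finset.mem_image]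
      rintro a (⟨_, h1⟩ | rfl) ⟨b, ⟨_, hb⟩, rfl⟩ <;> omega
    rw [Finset.card_union_of_disjoint d2, Finset.card_union_of_disjoint d1,
      Finset.card_singleton, Finset.card_image_of_injective _ (fun a b h => by omega)]
  have hd : dcnt σ j = ((platFinset σ).filter (fun k => k < j ∧ j < k + 3)).card := rfl
  rw [hcard2, hd, plateauCount_eq σ]
  omega


lemma mem_cF (n p : ℕ) (l : List Step) :
    l ∈ cF n p ↔ l.length = n ∧ IsMotzkin l ∧ plateauCount l = p := by
  rw [cF, Finset.mem_filter, mem_allLists]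

lemma dcnt_ne_zero_iff (σ : List Step) (j : ℕ) : dcnt σ j ≠ 0 ↔ j ∈ interior σ := by
  rw [Ne, dcnt_eq_zero_iff, not_not]

/-- The key double counting identity. -/
lemma core (n p : ℕ) (hn : 3 ≤ n) (hp : 1 ≤ p) :
    p * (cF n p).card + 2 * (p - 1) * (cF (n - 3) (p - 1)).card
      = (n - 2) * (cF (n - 3) (p - 1)).card + 2 * p * (cF (n - 3) p).card := by
  classical
  set T : Finset (Σ _ : List Step, ℕ) := (cF n p).sigma (fun l => platFinset l) with hT
  set S1 : Finset (Σ _ : List Step, ℕ) :=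
    (cF (n - 3) (p - 1)).sigma
      (fun σ => Finset.range (σ.length + 1) \ interior σ) with hS1
  set S2 : Finset (Σ _ : List Step, ℕ) :=
    (cF (n - 3) p).sigma (fun σ => interior σ) with hS2
  have hTcard : T.card = p * (cF n p).card := by
    rw [hT, Finset.card_sigma,
      Finset.sum_congr rfl (fun l hl => by
        rw [← plateauCount_eq, ((mem_cF n p l).mp hl).2.2]),
      Finset.sum_const, smul_eq_mul, mul_comm]
  have hS1card : S1.card + 2 * (p - 1) * (cF (n - 3) (p - 1)).card
      = (n - 2) * (cF (n - 3) (p - 1)).card := by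
    rw [hS1, Finset.card_sigma]
    have key : ∑ σ ∈ cF (n - 3) (p - 1),
        ((Finset.range (σ.length + 1) \ interior σ).card + 2 * (p - 1))
        = (n - 2) * (cF (n - 3) (p - 1)).card := by
      rw [Finset.sum_congr rfl (fun σ hσ => ?_), Finset.sum_const, smul_eq_mul, mul_comm]
      obtain ⟨hlen, _, hpc⟩ := (mem_cF _ _ σ).mp hσ
      have h1 := Finset.card_sdiff_add_card_eq_card (interior_subset σ)
      have h2 := card_interior σ
      rw [Finset.card_range] at h1
      omega
    rw [Finset.sum_add_distrib, Finset.sum_const, smul_eq_mul,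
      mul_comm ((cF (n - 3) (p - 1)).card) (2 * (p - 1))] at key
    exact key
  have hS2card : S2.card = 2 * p * (cF (n - 3) p).card := by
    rw [hS2, Finset.card_sigma,
      Finset.sum_congr rfl (fun σ hσ => by
        rw [card_interior σ, ((mem_cF _ _ σ).mp hσ).2.2]),
      Finset.sum_const, smul_eq_mul, mul_comm]
  have hdisj : Disjoint S1 S2 := by
    rw [Finset.disjoint_left]
    intro a ha1 ha2
    rw [hS1, Finset.mem_sigma] at ha1
    rw [hS2, Finset.mem_sigma] at ha2
    have e1 := ((mem_cF _ _ a.1).mp ha1.1).2.2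
    have e2 := ((mem_cF _ _ a.1).mp ha2.1).2.2
    omega
  have hbij : (S1 ∪ S2).card = T.card := by
    refine Finset.card_bij' (fun a _ => ⟨ins a.1 a.2, a.2⟩)
      (fun b _ => ⟨rem b.1 b.2, b.2⟩) ?_ ?_ ?_ ?_
    · -- forward membership
      rintro ⟨σ, j⟩ ha
      rw [Finset.mem_union] at ha
      rw [hT, Finset.mem_sigma]
      dsimp only
      rcases ha with ha | ha
      · rw [hS1, Finset.mem_sigma] at ha
        dsimp only at ha
        obtain ⟨hσ, hj⟩ := ha
        obtain ⟨hlen, hmot, hpc⟩ := (mem_cF _ _ σ).mp hσ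
        rw [Finset.mem_sdiff, Finset.mem_range] at hj
        have hjle : j ≤ σ.length := by omega
        have hd0 : dcnt σ j = 0 := (dcnt_eq_zero_iff σ j).mpr hj.2
        have hpi := plateau_ins σ j hjle
        refine ⟨(mem_cF n p _).mpr ⟨?_, ?_, ?_⟩, ?_⟩
        · rw [ins_length σ j hjle]; omega
        · exact (isMotzkin_ins_iff σ j hjle).mpr hmot
        · omega
        · rw [mem_platFinset, plat_ins σ j j hjle]
          exact Or.inr (Or.inl rfl)
      · rw [hS2, Finset.mem_sigma] at ha
        dsimp only at ha
        obtain ⟨hσ, hj⟩ := ha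
        obtain ⟨hlen, hmot, hpc⟩ := (mem_cF _ _ σ).mp hσ
        have hjle : j ≤ σ.length := by
          have := Finset.mem_range.mp (interior_subset σ hj)
          omega
        have hd1 : dcnt σ j = 1 := by
          have := (dcnt_ne_zero_iff σ j).mpr hj
          have := dcnt_le_one σ j
          omega
        have hpi := plateau_ins σ j hjle
        refine ⟨(mem_cF n p _).mpr ⟨?_, ?_, ?_⟩, ?_⟩
        · rw [ins_length σ j hjle]; omega
        · exact (isMotzkin_ins_iff σ j hjle).mpr hmot
        · omega
        · rw [mem_platFinset, plat_ins σ j j hjle]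
          exact Or.inr (Or.inl rfl)
    · -- backward membership
      rintro ⟨l, i⟩ hb
      rw [hT, Finset.mem_sigma] at hb
      dsimp only at hb
      obtain ⟨hl, hi⟩ := hb
      obtain ⟨hlen, hmot, hpc⟩ := (mem_cF _ _ l).mp hl
      rw [mem_platFinset] at hi
      have hi3 : i + 3 ≤ l.length := hi.lt_length
      have hlr : (rem l i).length = l.length - 3 := rem_length l i hi3
      have hile : i ≤ (rem l i).length := by omega
      have hlins : ins (rem l i) i = l := ins_rem l i hi hi3
      have hmot' : IsMotzkin (rem l i) := by
        rw [← isMotzkin_ins_iff (rem l i) i hile, hlins]; exact hmot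
      have hpi := plateau_ins (rem l i) i hile
      rw [hlins, hpc] at hpi
      have hd := dcnt_le_one (rem l i) i
      rw [Finset.mem_union]
      rcases Nat.eq_zero_or_pos (dcnt (rem l i) i) with hd0 | hd1
      · left
        rw [hS1, Finset.mem_sigma]
        dsimp only
        refine ⟨(mem_cF _ _ _).mpr ⟨by omega, hmot', by omega⟩, ?_⟩
        rw [Finset.mem_sdiff, Finset.mem_range]
        exact ⟨by omega, (dcnt_eq_zero_iff _ _).mp hd0⟩
      · right
        rw [hS2, Finset.mem_sigma]
        dsimp only
        refine ⟨(mem_cF _ _ _).mpr ⟨by omega, hmot', by omega⟩, ?_⟩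
        exact (dcnt_ne_zero_iff _ _).mp (by omega)
    · -- left inverse
      rintro ⟨σ, j⟩ ha
      dsimp only
      have hjle : j ≤ σ.length := by
        rw [Finset.mem_union] at ha
        rcases ha with ha | ha
        · rw [hS1, Finset.mem_sigma] at ha
          dsimp only at ha
          rw [Finset.mem_sdiff, Finset.mem_range] at ha
          have := ((mem_cF _ _ σ).mp ha.1).1
          omega
        · rw [hS2, Finset.mem_sigma] at ha
          dsimp only at ha
          have h1 := Finset.mem_range.mp (interior_subset σ ha.2)
          have h2 := ((mem_cF _ _ σ).mp ha.1).1
          omega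
      simp only [Sigma.mk.inj_iff, heq_eq_eq]
      exact ⟨rem_ins σ j hjle, trivial⟩
    · -- right inverse
      rintro ⟨l, i⟩ hb
      rw [hT, Finset.mem_sigma] at hb
      dsimp only at hb
      rw [mem_platFinset] at hb
      simp only [Sigma.mk.inj_iff, heq_eq_eq]
      exact ⟨ins_rem l i hb.2 hb.2.lt_length, trivial⟩
  rw [Finset.card_union_of_disjoint hdisj] at hbij
  omega


lemma cF_empty_of_lt (n p : ℕ) (hn : n < 3) (hp : 1 ≤ p) : cF n p = ∅ := by
  rw [Finset.eq_empty_iff_forall_notMem]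
  intro l hl
  obtain ⟨hlen, _, hpc⟩ := (mem_cF n p l).mp hl
  have : (platFinset l).Nonempty := by
    rw [← Finset.card_pos, ← plateauCount_eq, hpc]; omega
  obtain ⟨k, hk⟩ := this
  have := ((mem_platFinset l k).mp hk).lt_length
  omega

lemma key (p : ℕ) (hp : 1 ≤ p) (n : ℕ) :
    (p : ℚ) * (c (n : ℤ) (p : ℤ) : ℚ) - 2 * p * (c ((n : ℤ) - 3) (p : ℤ) : ℚ)
      = (n : ℚ) * (c ((n : ℤ) - 3) ((p - 1 : ℕ) : ℤ) : ℚ)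
        - 2 * p * (c ((n : ℤ) - 3) ((p - 1 : ℕ) : ℤ) : ℚ) := by
  rcases lt_or_ge n 3 with hn | hn
  · have hneg : ∀ q : ℤ, c ((n : ℤ) - 3) q = 0 := fun q => by
      rw [c, if_neg]
      rintro ⟨h1, _⟩
      omega
    have h0 : c (n : ℤ) (p : ℤ) = 0 := by
      rw [c_eq n p, cF_empty_of_lt n p hn hp, Finset.card_empty]
    simp [hneg, h0]
  · have e3 : ((n : ℤ) - 3) = ((n - 3 : ℕ) : ℤ) := by push_cast; omega
    rw [e3, c_eq n p, c_eq (n - 3) p, c_eq (n - 3) (p - 1)]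
    have hcore := core n p hn hp
    have c1 : ((n - 2 : ℕ) : ℚ) = (n : ℚ) - 2 := by
      rw [Nat.cast_sub (by omega)]; norm_num
    have c2 : ((p - 1 : ℕ) : ℚ) = (p : ℚ) - 1 := by
      rw [Nat.cast_sub (by omega)]; norm_num
    have hq : ((p : ℚ) * (cF n p).card + 2 * ((p : ℚ) - 1) * (cF (n - 3) (p - 1)).card)
        = ((n : ℚ) - 2) * (cF (n - 3) (p - 1)).card + 2 * p * (cF (n - 3) p).card := by
      have := congrArg (fun m : ℕ => (m : ℚ)) hcore
      push_cast [c1, c2] at this ⊢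
      linarith
    linarith

lemma coeff_shift3 (q n : ℕ) :
    (PowerSeries.coeff n) ((PowerSeries.X : PowerSeries ℚ) ^ 3 * PowerSeries.mk
      (fun m => (c (m : ℤ) (q : ℤ) : ℚ)))
      = (c ((n : ℤ) - 3) (q : ℤ) : ℚ) := by
  rw [PowerSeries.coeff_X_pow_mul']
  split_ifs with h
  · rw [PowerSeries.coeff_mk]
    congr 2
    push_cast
    omega
  · rw [c, if_neg]
    · simp
    · rintro ⟨h1, _⟩
      omega

lemma coeff_X_mul_derivative (h : PowerSeries ℚ) (n : ℕ) :
    (PowerSeries.coeff n) (PowerSeries.X * PowerSeries.derivative ℚ h)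
      = (n : ℚ) * (PowerSeries.coeff n) h := by
  cases n with
  | zero => simp [PowerSeries.coeff_zero_X_mul]
  | succ k =>
    rw [PowerSeries.coeff_succ_X_mul, PowerSeries.coeff_derivative]
    push_cast
    ring

end Aux

open PowerSeries in
theorem column_gf_recursion (p : ℕ) (hp : 1 ≤ p)
    (f : ℕ → PowerSeries ℚ) (hf : ∀ q : ℕ, f q = PowerSeries.mk (fun n => (c n q : ℚ))) :
    (p : PowerSeries ℚ) * (1 - 2 * X ^ 3) * f p
      = X * (d⁄dX ℚ) (X ^ 3 * f (p - 1)) - 2 * (p : PowerSeries ℚ) * X ^ 3 * f (p - 1) := by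
  classical
  rw [hf p, hf (p - 1)]
  set A : PowerSeries ℚ := PowerSeries.mk (fun n => (c (n : ℤ) (p : ℤ) : ℚ)) with hA
  set B : PowerSeries ℚ := PowerSeries.mk (fun n => (c (n : ℤ) ((p - 1 : ℕ) : ℤ) : ℚ)) with hB
  have e1 : PowerSeries.C ((p : ℚ)) = ((p : PowerSeries ℚ)) := map_natCast (PowerSeries.C (R := ℚ)) p
  have e2 : PowerSeries.C ((2 * p : ℚ)) = 2 * (p : PowerSeries ℚ) := by
    rw [map_mul, map_natCast, map_ofNat]
  have expandL : (p : PowerSeries ℚ) * (1 - 2 * X ^ 3) * A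
      = (p : ℚ) • A - (2 * (p : ℚ)) • (X ^ 3 * A) := by
    rw [PowerSeries.smul_eq_C_mul, PowerSeries.smul_eq_C_mul, e1, e2]
    ring
  have expandR : X * (d⁄dX ℚ) (X ^ 3 * B) - 2 * (p : PowerSeries ℚ) * X ^ 3 * B
      = X * (d⁄dX ℚ) (X ^ 3 * B) - (2 * (p : ℚ)) • (X ^ 3 * B) := by
    rw [PowerSeries.smul_eq_C_mul, e2]
    ring
  rw [expandL, expandR]
  ext n
  simp only [map_sub, PowerSeries.coeff_smul, smul_eq_mul, Aux.coeff_X_mul_derivative,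
    hA, hB, Aux.coeff_shift3, PowerSeries.coeff_mk]
  linarith [Aux.key p hp n]
end

section
/- Let g(x,y) = Σ_{n≥0} Σ_{p≥0} c(n,p) x^n y^p ∈ ℚ[[x,y]], let f₀(x) = g(x,0), and let J(x,y) denote the formal antiderivative of g in the variable y with J(x,0) = 0 (so ∂J/∂y = g). Then (1 - 2x³(1-y))·g(x,y) = (1 - 2x³)·f₀(x) + x·(∂/∂x)[x³·J(x,y)], where ∂/∂x is the formal partial derivative in x. -/
namespace MZ

instance : Fintype Step :=
  ⟨{Step.U, Step.H, Step.D}, by intro x; cases x <;> simp⟩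

/-- plateau-at predicate via indexing -/
def PlatAt (l : List Step) (j : ℕ) : Prop :=
  l[j]? = some Step.U ∧ l[j+1]? = some Step.H ∧ l[j+2]? = some Step.D

lemma take3_eq_iff (xs : List Step) :
    xs.take 3 = [Step.U, Step.H, Step.D] ↔
      xs[0]? = some Step.U ∧ xs[1]? = some Step.H ∧ xs[2]? = some Step.D := by
  rcases xs with _ | ⟨a, _ | ⟨b, _ | ⟨c, rest⟩⟩⟩ <;> simp [List.take]

lemma platAt_iff (l : List Step) (j : ℕ) :
    (l.drop j).take 3 = [Step.U, Step.H, Step.D] ↔ PlatAt l j := by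
  rw [take3_eq_iff, PlatAt]
  simp [List.getElem?_drop]

instance (l : List Step) : DecidablePred (PlatAt l) := fun _ => by
  unfold PlatAt; infer_instance

lemma PlatAt.le_len {l : List Step} {j : ℕ} (h : PlatAt l j) : j + 3 ≤ l.length := by
  have h2 := h.2.2
  have hlt : j + 2 < l.length := by
    by_contra hc
    rw [List.getElem?_eq_none (by omega)] at h2
    cases h2
  omega

/-- set of plateau positions -/
def plats (l : List Step) : Finset ℕ :=
  (Finset.range l.length).filter (fun j => PlatAt l j)

lemma plateauCount_eq (l : List Step) : plateauCount l = (plats l).card := by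
  unfold plateauCount plats
  congr 1
  ext j
  simp [platAt_iff]

lemma mem_plats {l : List Step} {j : ℕ} : j ∈ plats l ↔ PlatAt l j := by
  unfold plats
  simp only [Finset.mem_filter, Finset.mem_range]
  exact ⟨fun h => h.2, fun h => ⟨by have := h.le_len; omega, h⟩⟩


/-- insert a UHD block at position `i` -/
def ins (w : List Step) (i : ℕ) : List Step :=
  w.take i ++ [Step.U, Step.H, Step.D] ++ w.drop i

lemma length_ins {w : List Step} {i : ℕ} (h : i ≤ w.length) :
    (ins w i).length = w.length + 3 := by
  simp [ins]; omega

lemma get_ins_lt {w : List Step} {i k : ℕ} (h : i ≤ w.length) (hk : k < i) :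
    (ins w i)[k]? = w[k]? := by
  rw [ins, List.getElem?_append_left (by simp; omega),
    List.getElem?_append_left (by simp; omega), List.getElem?_take_of_lt hk]

lemma get_ins_mid {w : List Step} {i k : ℕ} (h : i ≤ w.length) (hk : i ≤ k) (hk3 : k < i + 3) :
    (ins w i)[k]? = [Step.U, Step.H, Step.D][k - i]? := by
  rw [ins, List.getElem?_append_left (by simp; omega),
    List.getElem?_append_right (by simp; omega)]
  congr 1
  simp; omega

lemma get_ins_ge {w : List Step} {i k : ℕ} (h : i ≤ w.length) (hk : i + 3 ≤ k) :
    (ins w i)[k]? = w[k - 3]? := by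
  rw [ins, List.getElem?_append_right (by simp; omega), List.getElem?_drop]
  congr 1
  simp; omega

lemma take_ins {w : List Step} {i : ℕ} (h : i ≤ w.length) :
    (ins w i).take i = w.take i := by
  rw [ins, List.append_assoc, List.take_append_of_le_length (by simp; omega),
    List.take_take]
  simp

lemma drop_ins {w : List Step} {i : ℕ} (h : i ≤ w.length) :
    (ins w i).drop (i + 3) = w.drop i := by
  rw [ins, List.append_assoc, List.drop_append]
  simp [List.length_take, Nat.min_eq_left h]


lemma platAt_ins_iff {w : List Step} {i : ℕ} (h : i ≤ w.length) (k : ℕ) :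
    PlatAt (ins w i) k ↔
      (k + 3 ≤ i ∧ PlatAt w k) ∨ k = i ∨ (i + 3 ≤ k ∧ PlatAt w (k - 3)) := by
  by_cases h1 : k + 3 ≤ i
  · have e1 := get_ins_lt h (show k < i by omega)
    have e2 := get_ins_lt h (show k + 1 < i by omega)
    have e3 := get_ins_lt h (show k + 2 < i by omega)
    unfold PlatAt
    rw [e1, e2, e3]
    constructor
    · exact fun hp => Or.inl ⟨h1, hp⟩
    · rintro (⟨_, hp⟩ | rfl | ⟨h2, hp⟩) <;> first | exact hp | omega
  by_cases h2 : k = i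
  · subst h2
    have e1 := get_ins_mid h (le_refl k) (by omega)
    have e2 := get_ins_mid h (show k ≤ k + 1 by omega) (by omega)
    have e3 := get_ins_mid h (show k ≤ k + 2 by omega) (by omega)
    simp only [Nat.sub_self] at e1
    rw [show k + 1 - k = 1 by omega] at e2
    rw [show k + 2 - k = 2 by omega] at e3
    unfold PlatAt
    rw [e1, e2, e3]
    simp
  by_cases h3 : i + 3 ≤ k
  · have e1 := get_ins_ge h h3
    have e2 := get_ins_ge h (show i + 3 ≤ k + 1 by omega)
    have e3 := get_ins_ge h (show i + 3 ≤ k + 2 by omega)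
    rw [show k + 1 - 3 = (k - 3) + 1 by omega] at e2
    rw [show k + 2 - 3 = (k - 3) + 2 by omega] at e3
    unfold PlatAt
    rw [e1, e2, e3]
    constructor
    · exact fun hp => Or.inr (Or.inr ⟨h3, hp⟩)
    · rintro (⟨_, hp⟩ | rfl | ⟨_, hp⟩) <;> first | exact hp | omega
  -- now k ∈ {i-2, i-1, i+1, i+2}: never a plateau
  constructor
  · intro hp
    exfalso
    by_cases h4 : k + 2 = i
    · have e := get_ins_mid h (show i ≤ k + 2 by omega) (by omega)
      rw [show k + 2 - i = 0 by omega] at e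
      have := hp.2.2
      rw [e] at this
      simp at this
    by_cases h5 : k + 1 = i
    · have e := get_ins_mid h (show i ≤ k + 1 by omega) (by omega)
      rw [show k + 1 - i = 0 by omega] at e
      have := hp.2.1
      rw [e] at this
      simp at this
    by_cases h6 : k = i + 1
    · have e := get_ins_mid h (show i ≤ k by omega) (by omega)
      rw [show k - i = 1 by omega] at e
      have := hp.1
      rw [e] at this
      simp at this
    · have h7 : k = i + 2 := by omega
      have e := get_ins_mid h (show i ≤ k by omega) (by omega)
      rw [show k - i = 2 by omega] at e
      have := hp.1
      rw [e] at this
      simp at this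
  · rintro (⟨hc, _⟩ | rfl | ⟨hc, _⟩) <;> omega

lemma plats_apart {w : List Step} {j j' : ℕ} (hj : j ∈ plats w) (hj' : j' ∈ plats w)
    (hlt : j < j') : j + 3 ≤ j' := by
  have p := mem_plats.1 hj
  have p' := mem_plats.1 hj'
  by_contra hc
  by_cases h1 : j' = j + 1
  · subst h1
    have := p.2.1
    rw [p'.1] at this
    simp at this
  · have h2 : j' = j + 2 := by omega
    subst h2
    have := p.2.2
    rw [p'.1] at this
    simp at this

/-- number of plateaus of `w` strictly containing position `i` (0 or 1) -/
def dcount (w : List Step) (i : ℕ) : ℕ :=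
  ((plats w).filter (fun j => j < i ∧ i < j + 3)).card

lemma dcount_le_one (w : List Step) (i : ℕ) : dcount w i ≤ 1 := by
  unfold dcount
  apply Finset.card_le_one.2
  intro a ha b hb
  have ha' := Finset.mem_filter.1 ha
  have hb' := Finset.mem_filter.1 hb
  by_contra hne
  rcases Nat.lt_or_ge a b with hlt | hge
  · have := plats_apart ha'.1 hb'.1 hlt
    omega
  · have hlt : b < a := by omega
    have := plats_apart hb'.1 ha'.1 hlt
    omega

lemma count_ins_plats {w : List Step} {i : ℕ} (h : i ≤ w.length) :
    plateauCount (ins w i) + dcount w i = plateauCount w + 1 := by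
  classical
  rw [plateauCount_eq, plateauCount_eq]
  have hplats : plats (ins w i) =
      insert i (((plats w).filter (fun j => j + 3 ≤ i)) ∪
        ((plats w).filter (fun j => i ≤ j)).image (fun j => j + 3)) := by
    ext k
    rw [mem_plats, platAt_ins_iff h]
    simp only [Finset.mem_insert, Finset.mem_union, Finset.mem_filter, Finset.mem_image,
      mem_plats]
    constructor
    · rintro (⟨h1, hp⟩ | rfl | ⟨h1, hp⟩)
      · exact Or.inr (Or.inl ⟨hp, h1⟩)
      · exact Or.inl rfl
      · exact Or.inr (Or.inr ⟨k - 3, ⟨hp, by omega⟩, by omega⟩)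
    · rintro (rfl | ⟨hp, h1⟩ | ⟨j, ⟨hp, h1⟩, rfl⟩)
      · exact Or.inr (Or.inl rfl)
      · exact Or.inl ⟨h1, hp⟩
      · refine Or.inr (Or.inr ⟨by omega, ?_⟩)
        rw [show j + 3 - 3 = j by omega]
        exact hp
  rw [hplats]
  have hdisj : Disjoint ((plats w).filter (fun j => j + 3 ≤ i))
      (((plats w).filter (fun j => i ≤ j)).image (fun j => j + 3)) := by
    rw [Finset.disjoint_left]
    intro a ha hb
    have ha' := Finset.mem_filter.1 ha
    obtain ⟨b, hb', rfl⟩ := Finset.mem_image.1 hb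
    have := (Finset.mem_filter.1 hb').2
    omega
  have hnotmem : i ∉ ((plats w).filter (fun j => j + 3 ≤ i)) ∪
      ((plats w).filter (fun j => i ≤ j)).image (fun j => j + 3) := by
    rw [Finset.mem_union]
    rintro (hmem | hmem)
    · have := (Finset.mem_filter.1 hmem).2; omega
    · obtain ⟨b, hb', rfl⟩ := Finset.mem_image.1 hmem
      have := (Finset.mem_filter.1 hb').2
      omega
  rw [Finset.card_insert_of_notMem hnotmem, Finset.card_union_of_disjoint hdisj,
    Finset.card_image_of_injective _ (fun a b hab => by omega)]
  have hsplit : (plats w).card =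
      ((plats w).filter (fun j => j + 3 ≤ i)).card +
      ((plats w).filter (fun j => i ≤ j)).card + dcount w i := by
    unfold dcount
    rw [← Finset.card_union_of_disjoint, ← Finset.card_union_of_disjoint]
    · congr 1
      ext j
      simp only [Finset.mem_union, Finset.mem_filter]
      constructor
      · intro hj
        by_cases h1 : j + 3 ≤ i
        · exact Or.inl (Or.inl ⟨hj, h1⟩)
        by_cases h2 : i ≤ j
        · exact Or.inl (Or.inr ⟨hj, h2⟩)
        · exact Or.inr ⟨hj, by omega⟩
      · rintro ((⟨hj, _⟩ | ⟨hj, _⟩) | ⟨hj, _⟩) <;> exact hj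
    · rw [Finset.disjoint_left]
      intro a ha hb
      have h2 := (Finset.mem_filter.1 hb).2
      rcases Finset.mem_union.1 ha with ha' | ha'
      · have := (Finset.mem_filter.1 ha').2; omega
      · have := (Finset.mem_filter.1 ha').2; omega
    · rw [Finset.disjoint_left]
      intro a ha hb
      have := (Finset.mem_filter.1 ha).2
      have := (Finset.mem_filter.1 hb).2
      omega
  omega


lemma count_ins (w : List Step) (i : ℕ) (s : Step) :
    (ins w i).count s = w.count s + 1 := by
  unfold ins
  rw [List.count_append, List.count_append]
  have : (w.take i).count s + (w.drop i).count s = w.count s := by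
    rw [← List.count_append, List.take_append_drop]
  have hone : ([Step.U, Step.H, Step.D].count s) = 1 := by cases s <;> rfl
  omega

lemma take_ins_le {w : List Step} {i k : ℕ} (h : i ≤ w.length) (hk : k ≤ i) :
    (ins w i).take k = w.take k := by
  unfold ins
  rw [List.append_assoc, List.take_append_of_le_length (by simp; omega), List.take_take]
  congr 1
  omega

lemma take_ins_mid {w : List Step} {i k : ℕ} (h : i ≤ w.length) (hk : i ≤ k)
    (hk3 : k ≤ i + 3) :
    (ins w i).take k = w.take i ++ [Step.U, Step.H, Step.D].take (k - i) := by
  have hlenA : (w.take i).length = i := by simp; omega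
  unfold ins
  rw [List.take_append, List.take_append,
    List.take_of_length_le (i := k) (l := w.take i) (by omega)]
  have h0 : k - (w.take i ++ [Step.U, Step.H, Step.D]).length = 0 := by simp; omega
  rw [h0, List.take_zero, List.append_nil, hlenA]

lemma take_ins_ge {w : List Step} {i k : ℕ} (h : i ≤ w.length) (hk : i + 3 ≤ k) :
    (ins w i).take k = w.take i ++ [Step.U, Step.H, Step.D] ++ (w.drop i).take (k - i - 3) := by
  have hlenA : (w.take i).length = i := by simp; omega
  unfold ins
  rw [List.take_append, List.take_append,
    List.take_of_length_le (i := k) (l := w.take i) (by omega),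
    List.take_of_length_le (i := k - (w.take i).length)
      (l := [Step.U, Step.H, Step.D]) (by simp; omega)]
  congr 2
  simp
  omega

lemma count_take_ins_ge {w : List Step} {i k : ℕ} (h : i ≤ w.length) (hk : i + 3 ≤ k)
    (s : Step) :
    ((ins w i).take k).count s = ((w.take (k - 3)).count s) + 1 := by
  rw [take_ins_ge h hk]
  have htake : w.take (k - 3) = w.take i ++ (w.drop i).take (k - 3 - i) := by
    have := List.take_add (l := w) (i := i) (j := k - 3 - i)
    rwa [show i + (k - 3 - i) = k - 3 by omega] at this
  rw [htake, List.count_append, List.count_append, List.count_append,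
    show k - i - 3 = k - 3 - i by omega]
  have hone : ([Step.U, Step.H, Step.D].count s) = 1 := by cases s <;> rfl
  omega

lemma isMotzkin_ins_iff {w : List Step} {i : ℕ} (h : i ≤ w.length) :
    IsMotzkin (ins w i) ↔ IsMotzkin w := by
  constructor
  · rintro ⟨hpre, hcnt⟩
    constructor
    · intro k
      by_cases hk : k ≤ i
      · have := hpre k
        rwa [take_ins_le h hk] at this
      · have := hpre (k + 3)
        rw [count_take_ins_ge h (by omega) Step.D,
          count_take_ins_ge h (by omega) Step.U,
          show k + 3 - 3 = k by omega] at this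
        omega
    · have hU := count_ins w i Step.U
      have hD := count_ins w i Step.D
      omega
  · rintro ⟨hpre, hcnt⟩
    constructor
    · intro k
      by_cases hk : k ≤ i
      · rw [take_ins_le h hk]
        exact hpre k
      by_cases hk3 : k ≤ i + 3
      · rw [take_ins_mid h (by omega) hk3, List.count_append, List.count_append]
        have := hpre i
        have hDm : ([Step.U, Step.H, Step.D].take (k - i)).count Step.D ≤
            ([Step.U, Step.H, Step.D].take (k - i)).count Step.U := by
          have h1 : k - i = 1 ∨ k - i = 2 ∨ k - i = 3 := by omega
          rcases h1 with h1 | h1 | h1 <;> rw [h1] <;> decide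
        omega
      · rw [count_take_ins_ge h (by omega) Step.D, count_take_ins_ge h (by omega) Step.U]
        have := hpre (k - 3)
        omega
    · have hU := count_ins w i Step.U
      have hD := count_ins w i Step.D
      omega

lemma isMotzkin_ins {w : List Step} {i : ℕ} (h : i ≤ w.length) (hw : IsMotzkin w) :
    IsMotzkin (ins w i) := (isMotzkin_ins_iff h).2 hw


open Finset

/-- all lists of a given length -/
def allL (n : ℕ) : Finset (List Step) :=
  (Finset.univ : Finset (Fin n → Step)).image List.ofFn

lemma mem_allL {n : ℕ} {l : List Step} : l ∈ allL n ↔ l.length = n := by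
  unfold allL
  simp only [Finset.mem_image, Finset.mem_univ, true_and]
  constructor
  · rintro ⟨f, rfl⟩; simp
  · rintro rfl
    exact ⟨fun i => l[(i : ℕ)], List.ofFn_getElem⟩

open Classical in
/-- Motzkin paths of length `n` with `p` plateaus -/
noncomputable def MP (n p : ℕ) : Finset (List Step) :=
  (allL n).filter (fun l => IsMotzkin l ∧ plateauCount l = p)

lemma mem_MP {n p : ℕ} {l : List Step} :
    l ∈ MP n p ↔ l.length = n ∧ IsMotzkin l ∧ plateauCount l = p := by
  classical
  unfold MP
  rw [Finset.mem_filter, mem_allL]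

lemma c_eq (n p : ℕ) : c (n : ℤ) (p : ℤ) = (MP n p).card := by
  unfold c
  rw [if_pos ⟨Int.natCast_nonneg n, Int.natCast_nonneg p⟩]
  rw [Int.toNat_natCast, Int.toNat_natCast]
  rw [← Nat.card_eq_finsetCard]
  exact Nat.card_congr (Equiv.subtypeEquivRight (fun l => mem_MP.symm))

/-- interior positions of plateaus of `w` -/
def intr (w : List Step) : Finset ℕ :=
  (plats w).biUnion (fun j => {j + 1, j + 2})

lemma mem_intr {w : List Step} {i : ℕ} :
    i ∈ intr w ↔ ∃ j ∈ plats w, j < i ∧ i < j + 3 := by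
  unfold intr
  simp only [Finset.mem_biUnion, Finset.mem_insert, Finset.mem_singleton]
  constructor
  · rintro ⟨j, hj, rfl | rfl⟩ <;> exact ⟨j, hj, by omega, by omega⟩
  · rintro ⟨j, hj, h1, h2⟩
    exact ⟨j, hj, by omega⟩

lemma card_intr (w : List Step) : (intr w).card = 2 * plateauCount w := by
  unfold intr
  rw [Finset.card_biUnion, plateauCount_eq]
  · rw [Finset.sum_congr rfl (fun j _ => show ({j + 1, j + 2} : Finset ℕ).card = 2 by
      rw [Finset.card_insert_of_notMem (by simp), Finset.card_singleton])]
    rw [Finset.sum_const, smul_eq_mul]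
    ring
  · intro a ha b hb hab
    have h3 : a + 3 ≤ b ∨ b + 3 ≤ a := by
      rcases Nat.lt_or_ge a b with hlt | hge
      · exact Or.inl (plats_apart ha hb hlt)
      · exact Or.inr (plats_apart hb ha (by omega))
    rw [Function.onFun, Finset.disjoint_left]
    intro x hx hx'
    simp only [Finset.mem_insert, Finset.mem_singleton] at hx hx'
    omega

lemma dcount_eq (w : List Step) (i : ℕ) :
    dcount w i = if i ∈ intr w then 1 else 0 := by
  split_ifs with h
  · obtain ⟨j, hj, h1, h2⟩ := mem_intr.1 h
    have hle := dcount_le_one w i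
    have hpos : 0 < dcount w i := by
      rw [dcount, Finset.card_pos]
      exact ⟨j, Finset.mem_filter.2 ⟨hj, h1, h2⟩⟩
    omega
  · rw [dcount, Finset.card_eq_zero, Finset.filter_eq_empty_iff]
    intro j hj hc
    exact h (mem_intr.2 ⟨j, hj, hc⟩)

lemma mem_intr_le {w : List Step} {i : ℕ} (h : i ∈ intr w) : i + 1 ≤ w.length := by
  obtain ⟨j, hj, h1, h2⟩ := mem_intr.1 h
  have := (mem_plats.1 hj).le_len
  omega


lemma ins_recover {w : List Step} {i : ℕ} (h : i ≤ w.length) :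
    (ins w i).take i ++ (ins w i).drop (i + 3) = w := by
  rw [take_ins h, drop_ins h, List.take_append_drop]

lemma ins_injOn {w w' : List Step} {i : ℕ} (hw : i ≤ w.length) (hw' : i ≤ w'.length)
    (h : ins w i = ins w' i) : w = w' := by
  rw [← ins_recover hw, h, ins_recover hw']

lemma exists_preimage {v : List Step} {j : ℕ} (hp : PlatAt v j) :
    ∃ w : List Step, w.length + 3 = v.length ∧ j ≤ w.length ∧ ins w j = v := by
  have h3 := hp.le_len
  refine ⟨v.take j ++ v.drop (j + 3), by simp; omega, by simp; omega, ?_⟩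
  have htk : (v.take j ++ v.drop (j + 3)).take j = v.take j := by
    rw [List.take_append_of_le_length (by simp; omega), List.take_take]
    congr 1; omega
  have hdr : (v.take j ++ v.drop (j + 3)).drop j = v.drop (j + 3) := by
    rw [List.drop_append, List.drop_of_length_le (by simp)]
    have : j - (v.take j).length = 0 := by simp; omega
    rw [this, List.drop_zero, List.nil_append]
  unfold ins
  rw [htk, hdr]
  have hv : v.drop j = [Step.U, Step.H, Step.D] ++ v.drop (j + 3) := by
    conv_lhs => rw [← List.take_append_drop 3 (v.drop j)]
    rw [(platAt_iff v j).2 hp, List.drop_drop]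
  rw [List.append_assoc, ← hv, List.take_append_drop]

open Finset

/-- marked-plateau pairs -/
noncomputable def TT (m p : ℕ) : Finset (List Step × ℕ) :=
  (MP (m + 3) p).biUnion (fun v => (plats v).image (fun j => (v, j)))

lemma mem_TT {m p : ℕ} {v : List Step} {j : ℕ} :
    (v, j) ∈ TT m p ↔ v ∈ MP (m + 3) p ∧ j ∈ plats v := by
  unfold TT
  simp only [Finset.mem_biUnion, Finset.mem_image, Prod.mk.injEq]
  constructor
  · rintro ⟨v', hv, j', hj, rfl, rfl⟩; exact ⟨hv, hj⟩
  · rintro ⟨hv, hj⟩; exact ⟨v, hv, j, hj, rfl, rfl⟩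

lemma card_TT (m p : ℕ) : (TT m p).card = p * (MP (m + 3) p).card := by
  unfold TT
  have hdisj : ∀ a ∈ MP (m + 3) p, ∀ b ∈ MP (m + 3) p, a ≠ b →
      Disjoint ((plats a).image (fun j => (a, j))) ((plats b).image (fun j => (b, j))) := by
    intro a _ b _ hab
    rw [Finset.disjoint_left]
    rintro x hx hx'
    obtain ⟨j, _, rfl⟩ := Finset.mem_image.1 hx
    obtain ⟨j', _, h'⟩ := Finset.mem_image.1 hx'
    exact hab ((Prod.mk.injEq _ _ _ _ ▸ h').1.symm)
  have hcongr : ∀ v ∈ MP (m + 3) p, ((plats v).image (fun j => (v, j))).card = p := by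
    intro v hv
    rw [Finset.card_image_of_injective _ (fun a b hab => (Prod.mk.injEq _ _ _ _ ▸ hab).2)]
    exact (plateauCount_eq v ▸ (mem_MP.1 hv).2.2 : (plats v).card = p)
  rw [Finset.card_biUnion hdisj, Finset.sum_congr rfl hcongr, Finset.sum_const, smul_eq_mul,
    mul_comm]

/-- interior pairs -/
noncomputable def AA (m p : ℕ) : Finset (List Step × ℕ) :=
  ((MP m p) ×ˢ Finset.range (m + 1)).filter (fun q => q.2 ∈ intr q.1)

/-- non-interior pairs -/
noncomputable def BB (m p : ℕ) : Finset (List Step × ℕ) :=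
  ((MP m p) ×ˢ Finset.range (m + 1)).filter (fun q => q.2 ∉ intr q.1)

lemma mem_AA {m p : ℕ} {w : List Step} {i : ℕ} :
    (w, i) ∈ AA m p ↔ w ∈ MP m p ∧ i ≤ m ∧ i ∈ intr w := by
  classical
  unfold AA
  simp only [Finset.mem_filter, Finset.mem_product, Finset.mem_range]
  constructor
  · rintro ⟨⟨h1, h2⟩, h3⟩; exact ⟨h1, by omega, h3⟩
  · rintro ⟨h1, h2, h3⟩; exact ⟨⟨h1, by omega⟩, h3⟩

lemma card_AA (m p : ℕ) : (AA m p).card = 2 * p * (MP m p).card := by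
  classical
  have hAA : AA m p = (MP m p).biUnion (fun w => (intr w).image (fun i => (w, i))) := by
    ext q
    unfold AA
    rw [Finset.mem_filter, Finset.mem_product, Finset.mem_range]
    simp only [Finset.mem_biUnion, Finset.mem_image]
    constructor
    · rintro ⟨⟨h1, h2⟩, h3⟩
      exact ⟨q.1, h1, q.2, h3, rfl⟩
    · rintro ⟨w, hw, i, hi, rfl⟩
      have hlen : w.length = m := (mem_MP.1 hw).1
      have := mem_intr_le hi
      exact ⟨⟨hw, by omega⟩, hi⟩
  have hdisj : ∀ a ∈ MP m p, ∀ b ∈ MP m p, a ≠ b →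
      Disjoint ((intr a).image (fun i => (a, i))) ((intr b).image (fun i => (b, i))) := by
    intro a _ b _ hab
    rw [Finset.disjoint_left]
    rintro x hx hx'
    obtain ⟨j, _, rfl⟩ := Finset.mem_image.1 hx
    obtain ⟨j', _, h'⟩ := Finset.mem_image.1 hx'
    exact hab ((Prod.mk.injEq _ _ _ _ ▸ h').1.symm)
  have hcongr : ∀ w ∈ MP m p, ((intr w).image (fun i => (w, i))).card = 2 * p := by
    intro w hw
    rw [Finset.card_image_of_injective _ (fun a b hab => (Prod.mk.injEq _ _ _ _ ▸ hab).2),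
      card_intr, (mem_MP.1 hw).2.2]
  rw [hAA, Finset.card_biUnion hdisj, Finset.sum_congr rfl hcongr, Finset.sum_const,
    smul_eq_mul, mul_comm, mul_assoc]

lemma card_AA_add_BB (m p : ℕ) :
    (AA m p).card + (BB m p).card = (m + 1) * (MP m p).card := by
  classical
  unfold AA BB
  rw [Finset.card_filter_add_card_filter_not, Finset.card_product, Finset.card_range]
  ring


lemma mem_BB {m p : ℕ} {w : List Step} {i : ℕ} :
    (w, i) ∈ BB m p ↔ w ∈ MP m p ∧ i ≤ m ∧ i ∉ intr w := by
  classical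
  unfold BB
  simp only [Finset.mem_filter, Finset.mem_product, Finset.mem_range]
  constructor
  · rintro ⟨⟨h1, h2⟩, h3⟩; exact ⟨h1, by omega, h3⟩
  · rintro ⟨h1, h2, h3⟩; exact ⟨⟨h1, by omega⟩, h3⟩

lemma TT_eq (m p : ℕ) :
    TT m (p + 1) = ((BB m p).image (fun q => (ins q.1 q.2, q.2))) ∪
      ((AA m (p + 1)).image (fun q => (ins q.1 q.2, q.2))) := by
  ext q
  obtain ⟨v, j⟩ := q
  rw [mem_TT, Finset.mem_union, Finset.mem_image, Finset.mem_image]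
  constructor
  · rintro ⟨hv, hj⟩
    obtain ⟨hlenv, hmot, hplat⟩ := mem_MP.1 hv
    have hpj : PlatAt v j := mem_plats.1 hj
    obtain ⟨w, hwlen, hjw, hins⟩ := exists_preimage hpj
    have hwm : w.length = m := by omega
    have hwmot : IsMotzkin w := (isMotzkin_ins_iff hjw).1 (hins ▸ hmot)
    have hcnt := count_ins_plats hjw
    rw [hins, hplat] at hcnt
    have hd := dcount_eq w j
    by_cases hint : j ∈ intr w
    · rw [if_pos hint] at hd
      refine Or.inr ⟨(w, j), mem_AA.2 ⟨mem_MP.2 ⟨hwm, hwmot, by omega⟩, by omega, hint⟩, ?_⟩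
      simp [hins]
    · rw [if_neg hint] at hd
      refine Or.inl ⟨(w, j), mem_BB.2 ⟨mem_MP.2 ⟨hwm, hwmot, by omega⟩, by omega, hint⟩, ?_⟩
      simp [hins]
  · rintro (⟨⟨w, i⟩, hw, heq⟩ | ⟨⟨w, i⟩, hw, heq⟩)
    · obtain ⟨hw1, hw2, hw3⟩ := mem_BB.1 hw
      obtain ⟨hlen, hmot, hplat⟩ := mem_MP.1 hw1
      have hiw : i ≤ w.length := by omega
      obtain ⟨rfl, rfl⟩ : ins w i = v ∧ i = j := by
        simpa [Prod.ext_iff] using heq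
      have hcnt := count_ins_plats hiw
      rw [dcount_eq, if_neg hw3] at hcnt
      refine ⟨mem_MP.2 ⟨by rw [length_ins hiw]; omega,
          (isMotzkin_ins_iff hiw).2 hmot, by omega⟩, ?_⟩
      exact mem_plats.2 ((platAt_ins_iff hiw i).2 (Or.inr (Or.inl rfl)))
    · obtain ⟨hw1, hw2, hw3⟩ := mem_AA.1 hw
      obtain ⟨hlen, hmot, hplat⟩ := mem_MP.1 hw1
      have hiw : i ≤ w.length := by omega
      obtain ⟨rfl, rfl⟩ : ins w i = v ∧ i = j := by
        simpa [Prod.ext_iff] using heq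
      have hcnt := count_ins_plats hiw
      rw [dcount_eq, if_pos hw3] at hcnt
      refine ⟨mem_MP.2 ⟨by rw [length_ins hiw]; omega,
          (isMotzkin_ins_iff hiw).2 hmot, by omega⟩, ?_⟩
      exact mem_plats.2 ((platAt_ins_iff hiw i).2 (Or.inr (Or.inl rfl)))

lemma key_count (m q : ℕ) :
    (q + 1) * (MP (m + 3) (q + 1)).card + 2 * q * (MP m q).card
      = 2 * (q + 1) * (MP m (q + 1)).card + (m + 1) * (MP m q).card := by
  classical
  have h1 := card_TT m (q + 1)
  have h2 := card_AA m q
  have h3 := card_AA m (q + 1)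
  have h4 := card_AA_add_BB m q
  have hinjB : Set.InjOn (fun r : List Step × ℕ => (ins r.1 r.2, r.2)) (BB m q) := by
    rintro ⟨w, i⟩ ha ⟨w', i'⟩ hb heq
    obtain ⟨hw1, hw2, _⟩ := mem_BB.1 ha
    obtain ⟨hw1', hw2', _⟩ := mem_BB.1 hb
    obtain ⟨he1, rfl⟩ : ins w i = ins w' i' ∧ i = i' := by simpa [Prod.ext_iff] using heq
    have := ins_injOn (by rw [(mem_MP.1 hw1).1]; omega) (by rw [(mem_MP.1 hw1').1]; omega) he1
    simp [this]
  have hinjA : Set.InjOn (fun r : List Step × ℕ => (ins r.1 r.2, r.2)) (AA m (q + 1)) := by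
    rintro ⟨w, i⟩ ha ⟨w', i'⟩ hb heq
    obtain ⟨hw1, hw2, _⟩ := mem_AA.1 ha
    obtain ⟨hw1', hw2', _⟩ := mem_AA.1 hb
    obtain ⟨he1, rfl⟩ : ins w i = ins w' i' ∧ i = i' := by simpa [Prod.ext_iff] using heq
    have := ins_injOn (by rw [(mem_MP.1 hw1).1]; omega) (by rw [(mem_MP.1 hw1').1]; omega) he1
    simp [this]
  have hdis : Disjoint ((BB m q).image (fun r => (ins r.1 r.2, r.2)))
      ((AA m (q + 1)).image (fun r => (ins r.1 r.2, r.2))) := by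
    rw [Finset.disjoint_left]
    rintro x hx hx'
    obtain ⟨⟨w, i⟩, hw, rfl⟩ := Finset.mem_image.1 hx
    obtain ⟨⟨w', i'⟩, hw', heq⟩ := Finset.mem_image.1 hx'
    obtain ⟨hw1, hw2, _⟩ := mem_BB.1 hw
    obtain ⟨hw1', hw2', _⟩ := mem_AA.1 hw'
    obtain ⟨he1, rfl⟩ : ins w' i' = ins w i ∧ i' = i := by simpa [Prod.ext_iff] using heq
    have hww : w' = w :=
      ins_injOn (by rw [(mem_MP.1 hw1').1]; omega) (by rw [(mem_MP.1 hw1).1]; omega) he1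
    subst hww
    have e1 := (mem_MP.1 hw1).2.2
    have e2 := (mem_MP.1 hw1').2.2
    omega
  have h5 : (TT m (q + 1)).card = (BB m q).card + (AA m (q + 1)).card := by
    rw [TT_eq, Finset.card_union_of_disjoint hdis, Finset.card_image_of_injOn hinjB,
      Finset.card_image_of_injOn hinjA]
  omega

/-- the key numerical identity -/
lemma key (m q : ℕ) :
    (q + 1) * c (m + 3 : ℕ) (q + 1 : ℕ) + 2 * q * c (m : ℕ) (q : ℕ)
      = 2 * (q + 1) * c (m : ℕ) (q + 1 : ℕ) + (m + 1) * c (m : ℕ) (q : ℕ) := by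
  rw [c_eq (m + 3) (q + 1), c_eq m q, c_eq m (q + 1)]
  exact key_count m q


lemma plateauCount_small {l : List Step} (h : l.length < 3) : plateauCount l = 0 := by
  rw [plateauCount_eq, Finset.card_eq_zero, Finset.eq_empty_iff_forall_notMem]
  intro j hj
  have := (mem_plats.1 hj).le_len
  omega

lemma c_small (n p : ℕ) (hn : n < 3) : c (n : ℤ) ((p + 1 : ℕ) : ℤ) = 0 := by
  rw [c_eq, Finset.card_eq_zero, Finset.eq_empty_iff_forall_notMem]
  intro l hl
  obtain ⟨h1, _, h3⟩ := mem_MP.1 hl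
  rw [plateauCount_small (by omega)] at h3
  omega

lemma g_small (n : ℕ) (hn : n < 3) :
    (PowerSeries.mk fun p => (c (n : ℤ) (p : ℤ) : ℚ)) = PowerSeries.C (R := ℚ) (c (n : ℤ) 0 : ℚ) := by
  apply PowerSeries.ext
  intro p
  rw [PowerSeries.coeff_mk, PowerSeries.coeff_C]
  cases p with
  | zero => simp
  | succ q =>
    rw [if_neg (by omega), c_small n q hn]
    simp

end MZ

open PowerSeries in
/-- Working in `ℚ[[x,y]]` realized as `(ℚ[[y]])[[x]]`: the outer variable is `x`
and the inner variable is `y`.  `g` is the bivariate plateau generating function,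
`F0 = g(x,0)`, and `J` is the formal antiderivative of `g` in `y` with `J(x,0) = 0`
(characterized by: its constant coefficient in `y` vanishes and its `y`-derivative,
taken coefficientwise in `x`, is `g`). -/
theorem integral_differential_form
    (g J F0 : PowerSeries (PowerSeries ℚ))
    (hg : g = PowerSeries.mk fun n => PowerSeries.mk fun p => (c n p : ℚ))
    (hF0 : F0 = PowerSeries.mk fun n => PowerSeries.C (c n 0 : ℚ))
    (hJ0 : ∀ n : ℕ, PowerSeries.constantCoeff (PowerSeries.coeff n J) = 0)
    (hJ' : ∀ n : ℕ, (d⁄dX ℚ) (PowerSeries.coeff n J)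
        = PowerSeries.coeff n g) :
    (1 - 2 * X ^ 3 * (1 - PowerSeries.C (R := PowerSeries ℚ) X)) * g
      = (1 - 2 * X ^ 3) * F0 + X * (d⁄dX (PowerSeries ℚ)) (X ^ 3 * J) := by
  subst hg hF0
  set G : PowerSeries (PowerSeries ℚ) :=
    PowerSeries.mk fun n => PowerSeries.mk fun p => (c n p : ℚ) with hG
  set F : PowerSeries (PowerSeries ℚ) :=
    PowerSeries.mk fun n => PowerSeries.C (R := ℚ) (c n 0 : ℚ) with hF
  have e1 : (1 - 2 * X ^ 3 * (1 - PowerSeries.C (R := PowerSeries ℚ) X)) * G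
      = G - (X ^ 3 * G + X ^ 3 * G) + PowerSeries.C (R := PowerSeries ℚ) X * (X ^ 3 * G + X ^ 3 * G) := by
    ring
  have e2 : (1 - 2 * X ^ 3) * F = F - (X ^ 3 * F + X ^ 3 * F) := by ring
  rw [e1, e2]
  apply PowerSeries.ext
  intro n
  simp only [map_add, map_sub, PowerSeries.coeff_C_mul]
  rcases Nat.lt_or_ge n 3 with hn | hn
  · have hx3 : ∀ f : PowerSeries (PowerSeries ℚ),
        (PowerSeries.coeff (R := PowerSeries ℚ) n) (X ^ 3 * f) = 0 := by
      intro f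
      rw [PowerSeries.coeff_X_pow_mul', if_neg (by omega)]
    have hxd : (PowerSeries.coeff (R := PowerSeries ℚ) n) (X * (d⁄dX (PowerSeries ℚ)) (X ^ 3 * J)) = 0 := by
      match n, hn with
      | 0, _ => exact PowerSeries.coeff_zero_X_mul _
      | 1, _ =>
        rw [PowerSeries.coeff_succ_X_mul, PowerSeries.coeff_derivative,
          PowerSeries.coeff_X_pow_mul', if_neg (by omega), zero_mul]
      | 2, _ =>
        rw [PowerSeries.coeff_succ_X_mul, PowerSeries.coeff_derivative,
          PowerSeries.coeff_X_pow_mul', if_neg (by omega), zero_mul]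
    simp only [hx3, hxd]
    rw [hG, hF]
    simp only [PowerSeries.coeff_mk]
    rw [MZ.g_small n hn]
    simp
  · obtain ⟨m, rfl⟩ : ∃ m, n = m + 3 := ⟨n - 3, by omega⟩
    have hc3 : ∀ f : PowerSeries (PowerSeries ℚ),
        (PowerSeries.coeff (R := PowerSeries ℚ) (m + 3)) (X ^ 3 * f)
          = (PowerSeries.coeff (R := PowerSeries ℚ) m) f :=
      fun f => PowerSeries.coeff_X_pow_mul f 3 m
    have hxd : (PowerSeries.coeff (R := PowerSeries ℚ) (m + 3))
        (X * (d⁄dX (PowerSeries ℚ)) (X ^ 3 * J))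
          = (PowerSeries.coeff (R := PowerSeries ℚ) m) J * (((m : PowerSeries ℚ) + 2) + 1) := by
      have h1 : (PowerSeries.coeff (R := PowerSeries ℚ) (m + 3))
          (X * (d⁄dX (PowerSeries ℚ)) (X ^ 3 * J))
            = (PowerSeries.coeff (R := PowerSeries ℚ) (m + 2)) ((d⁄dX (PowerSeries ℚ)) (X ^ 3 * J)) :=
        PowerSeries.coeff_succ_X_mul (m + 2) _
      have h2 := PowerSeries.coeff_derivative (X ^ 3 * J) (m + 2)
      rw [h1, h2]
      have h3 : (PowerSeries.coeff (R := PowerSeries ℚ) (m + 3)) (X ^ 3 * J)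
          = (PowerSeries.coeff (R := PowerSeries ℚ) m) J := hc3 J
      rw [show (m + 2 + 1) = m + 3 by omega, h3]
      push_cast
      ring
    simp only [hc3, hxd]
    apply PowerSeries.ext
    intro p
    simp only [map_add, map_sub, hG, hF, PowerSeries.coeff_mk]
    cases p with
    | zero =>
      have hJm0 : (PowerSeries.coeff (R := ℚ) 0) ((PowerSeries.coeff (R := PowerSeries ℚ) m) J) = 0 := by
        rw [PowerSeries.coeff_zero_eq_constantCoeff]
        exact hJ0 m
      rw [PowerSeries.coeff_zero_X_mul]
      have hmul : (PowerSeries.coeff (R := ℚ) 0)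
          ((PowerSeries.coeff (R := PowerSeries ℚ) m) J * (((m : PowerSeries ℚ) + 2) + 1)) = 0 := by
        have hC : (((m : PowerSeries ℚ) + 2) + 1) = PowerSeries.C (R := ℚ) (((m : ℚ) + 2) + 1) := by
          rw [show ((m : ℚ) + 2 + 1) = ((m + 3 : ℕ) : ℚ) by push_cast; ring, map_natCast]
          push_cast
          ring
        rw [hC, PowerSeries.coeff_mul_C, hJm0, zero_mul]
      rw [hmul]
      simp [PowerSeries.coeff_zero_C]
    | succ q =>
      rw [PowerSeries.coeff_succ_X_mul]
      have hCz : ∀ a : ℚ, (PowerSeries.coeff (R := ℚ) (q + 1)) (PowerSeries.C (R := ℚ) a) = 0 := by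
        intro a
        rw [PowerSeries.coeff_C, if_neg (by omega)]
      have he : (PowerSeries.coeff (R := ℚ) (q + 1)) ((PowerSeries.coeff (R := PowerSeries ℚ) m) J)
          * ((q : ℚ) + 1) = (c m q : ℚ) := by
        have h4 := congrArg (PowerSeries.coeff (R := ℚ) q) (hJ' m)
        rw [PowerSeries.coeff_derivative] at h4
        rw [hG, PowerSeries.coeff_mk, PowerSeries.coeff_mk] at h4
        exact_mod_cast h4
      have hmul : (PowerSeries.coeff (R := ℚ) (q + 1))
          ((PowerSeries.coeff (R := PowerSeries ℚ) m) J * (((m : PowerSeries ℚ) + 2) + 1))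
            = (PowerSeries.coeff (R := ℚ) (q + 1)) ((PowerSeries.coeff (R := PowerSeries ℚ) m) J)
              * (((m : ℚ) + 2) + 1) := by
        have hC : (((m : PowerSeries ℚ) + 2) + 1) = PowerSeries.C (R := ℚ) (((m : ℚ) + 2) + 1) := by
          rw [show ((m : ℚ) + 2 + 1) = ((m + 3 : ℕ) : ℚ) by push_cast; ring, map_natCast]
          push_cast
          ring
        rw [hC, PowerSeries.coeff_mul_C]
      rw [hmul, hCz, hCz]
      simp only [map_add, PowerSeries.coeff_mk]
      -- scalar identity
      have hkey : ((q : ℚ) + 1) * (c ((m + 3 : ℕ) : ℤ) ((q + 1 : ℕ) : ℤ) : ℚ)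
          + 2 * (q : ℚ) * (c ((m : ℕ) : ℤ) ((q : ℕ) : ℤ) : ℚ)
            = 2 * ((q : ℚ) + 1) * (c ((m : ℕ) : ℤ) ((q + 1 : ℕ) : ℤ) : ℚ)
              + ((m : ℚ) + 1) * (c ((m : ℕ) : ℤ) ((q : ℕ) : ℤ) : ℚ) := by
        exact_mod_cast congrArg (Nat.cast : ℕ → ℚ) (MZ.key m q)
      have hq1 : ((q : ℚ) + 1) ≠ 0 := by positivity
      apply mul_left_cancel₀ hq1
      linear_combination hkey - ((m : ℚ) + 3) * he
end

section
/- For every integer m ≥ 0 there is exactly one Motzkin path of length 3m with exactly m plateaus, i.e., c(3m, m) = 1. -/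
/-- The canonical path `(UHD)^m`. -/
def pathList : ℕ → List Step
  | 0 => []
  | m + 1 => Step.U :: Step.H :: Step.D :: pathList m

lemma pathList_length (m : ℕ) : (pathList m).length = 3 * m := by
  induction m with
  | zero => rfl
  | succ m ih => simp [pathList, ih]; omega

lemma pathList_count (m : ℕ) :
    (pathList m).count Step.U = m ∧ (pathList m).count Step.D = m := by
  induction m with
  | zero => simp [pathList]
  | succ m ih => simp [pathList, List.count_cons, ih.1, ih.2]

lemma pathList_prefix (m : ℕ) (k : ℕ) :
    ((pathList m).take k).count Step.D ≤ ((pathList m).take k).count Step.U := by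
  induction m generalizing k with
  | zero => simp [pathList]
  | succ m ih =>
    match k with
    | 0 => simp
    | 1 => rw [show (pathList (m+1)).take 1 = [Step.U] from rfl]; decide
    | 2 => rw [show (pathList (m+1)).take 2 = [Step.U, Step.H] from rfl]; decide
    | (j+3) =>
      have hind := ih j
      have htk : (pathList (m+1)).take (j+3) =
          Step.U :: Step.H :: Step.D :: (pathList m).take j := rfl
      rw [htk]
      simp only [List.count_cons]
      simp
      omega

lemma pathList_isMotzkin (m : ℕ) : IsMotzkin (pathList m) :=
  ⟨pathList_prefix m, (pathList_count m).1.trans (pathList_count m).2.symm⟩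

/-- From a plateau occurrence, extract individual entries. -/
lemma plateau_getElem {l : List Step} {i : ℕ}
    (h : (l.drop i).take 3 = [Step.U, Step.H, Step.D]) :
    l[i]? = some Step.U ∧ l[i+1]? = some Step.H ∧ l[i+2]? = some Step.D := by
  have h0 : ((l.drop i).take 3)[0]? = some Step.U := by rw [h]; rfl
  have h1 : ((l.drop i).take 3)[1]? = some Step.H := by rw [h]; rfl
  have h2 : ((l.drop i).take 3)[2]? = some Step.D := by rw [h]; rfl
  rw [List.getElem?_take, if_pos (by norm_num), List.getElem?_drop] at h0 h1 h2
  simpa using ⟨h0, h1, h2⟩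

lemma pathList_plateau_iff (m i : ℕ) :
    ((pathList m).drop i).take 3 = [Step.U, Step.H, Step.D] ↔ ∃ k < m, i = 3 * k := by
  induction m generalizing i with
  | zero =>
    simp [pathList]
  | succ m ih =>
    match i with
    | 0 =>
      simp only [pathList, List.drop_zero, List.take_succ_cons]
      constructor
      · intro _; exact ⟨0, by omega, by omega⟩
      · intro _; rfl
    | 1 =>
      constructor
      · intro h
        have h' : Step.H :: Step.D :: (pathList m).take 1 = [Step.U, Step.H, Step.D] := h
        simp at h'
      · rintro ⟨k, _, hk⟩; omega
    | 2 =>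
      constructor
      · intro h
        have h' : Step.D :: (pathList m).take 2 = [Step.U, Step.H, Step.D] := h
        simp at h'
      · rintro ⟨k, _, hk⟩; omega
    | (j+3) =>
      have hdrop : (pathList (m+1)).drop (j+3) = (pathList m).drop j := rfl
      rw [hdrop, ih]
      constructor
      · rintro ⟨k, hk, rfl⟩; exact ⟨k+1, by omega, by omega⟩
      · rintro ⟨k, hk, hkk⟩
        refine ⟨k - 1, by omega, by omega⟩

lemma pathList_plateauCount (m : ℕ) : plateauCount (pathList m) = m := by
  unfold plateauCount
  have hfil : (Finset.range (pathList m).length).filter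
      (fun i => ((pathList m).drop i).take 3 = [Step.U, Step.H, Step.D]) =
      (Finset.range m).image (fun k => 3 * k) := by
    ext i
    simp only [Finset.mem_filter, Finset.mem_range, Finset.mem_image, pathList_length,
      pathList_plateau_iff]
    constructor
    · rintro ⟨_, k, hk, rfl⟩; exact ⟨k, hk, rfl⟩
    · rintro ⟨k, hk, rfl⟩; exact ⟨by omega, k, hk, rfl⟩
  rw [hfil, Finset.card_image_of_injective _ (fun a b h => by omega), Finset.card_range]

/-- Two distinct plateau positions differ by at least 3. -/
lemma plateau_spacing {l : List Step} {i j : ℕ}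
    (hi : (l.drop i).take 3 = [Step.U, Step.H, Step.D])
    (hj : (l.drop j).take 3 = [Step.U, Step.H, Step.D])
    (hij : i < j) : i + 3 ≤ j := by
  by_contra hc
  obtain ⟨hiU, hiH, hiD⟩ := plateau_getElem hi
  obtain ⟨hjU, _, _⟩ := plateau_getElem hj
  have : j = i + 1 ∨ j = i + 2 := by omega
  rcases this with rfl | rfl
  · rw [hjU] at hiH; exact Step.noConfusion (Option.some.inj hiH)
  · rw [hjU] at hiD; exact Step.noConfusion (Option.some.inj hiD)

lemma plateau_pos_lt {l : List Step} {i : ℕ}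
    (h : (l.drop i).take 3 = [Step.U, Step.H, Step.D]) : i + 3 ≤ l.length := by
  have h2 := (plateau_getElem h).2.2
  obtain ⟨hlt, -⟩ := List.getElem?_eq_some_iff.mp h2
  omega

/-- Reconstruction: if every `3k`, `k<m`, is a plateau position, the path is `pathList m`. -/
lemma eq_pathList {m : ℕ} {l : List Step} (hlen : l.length = 3 * m)
    (h : ∀ k < m, (l.drop (3 * k)).take 3 = [Step.U, Step.H, Step.D]) :
    l = pathList m := by
  induction m generalizing l with
  | zero => simpa [pathList, List.length_eq_zero_iff] using hlen
  | succ m ih =>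
    have h0 : l.take 3 = [Step.U, Step.H, Step.D] := by simpa using h 0 (by omega)
    have hl : l = [Step.U, Step.H, Step.D] ++ l.drop 3 := by
      conv_lhs => rw [← List.take_append_drop 3 l, h0]
    have hrest : l.drop 3 = pathList m := by
      apply ih
      · simp [hlen]; omega
      · intro k hk
        have : (l.drop 3).drop (3 * k) = l.drop (3 * (k + 1)) := by
          rw [List.drop_drop]; ring_nf
        rw [this]
        exact h (k + 1) (by omega)
    rw [hl, hrest]; rfl

/-- Uniqueness: a path of length `3m` with `m` plateaus is `pathList m`. -/
lemma unique_path {m : ℕ} {l : List Step} (hlen : l.length = 3 * m)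
    (hp : plateauCount l = m) : l = pathList m := by
  set S := (Finset.range l.length).filter
    (fun i => (l.drop i).take 3 = [Step.U, Step.H, Step.D]) with hS
  have hcard : S.card = m := hp
  have hmemS : ∀ i ∈ S, (l.drop i).take 3 = [Step.U, Step.H, Step.D] := by
    intro i hi
    exact (Finset.mem_filter.mp hi).2
  apply eq_pathList hlen
  -- use the order iso to show S = {0, 3, ..., 3(m-1)}
  have e := S.orderIsoOfFin hcard
  have hspace : ∀ k : ℕ, ∀ hk : k + 1 < m, ((e ⟨k, by omega⟩ : S) : ℕ) + 3 ≤ ((e ⟨k+1, hk⟩ : S) : ℕ) := by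
    intro k hk
    apply plateau_spacing (hmemS _ (e ⟨k, by omega⟩).2) (hmemS _ (e ⟨k+1, hk⟩).2)
    exact e.strictMono (by exact Fin.mk_lt_mk.mpr (by omega))
  have hlow : ∀ k : ℕ, ∀ hk : k < m, 3 * k ≤ ((e ⟨k, hk⟩ : S) : ℕ) := by
    intro k
    induction k with
    | zero => intro _; omega
    | succ k ihk =>
      intro hk
      have := hspace k hk
      have := ihk (by omega)
      omega
  have hhigh : ∀ d k : ℕ, ∀ hk : k < m, k + d + 1 = m → ((e ⟨k, hk⟩ : S) : ℕ) ≤ 3 * k := by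
    intro d
    induction d with
    | zero =>
      intro k hk hkm
      have hmem := (e ⟨k, hk⟩).2
      have := plateau_pos_lt (hmemS _ hmem)
      omega
    | succ d ihd =>
      intro k hk hkm
      have h1 := hspace k (by omega)
      have h2 := ihd (k+1) (by omega) (by omega)
      omega
  intro k hk
  have : ((e ⟨k, hk⟩ : S) : ℕ) = 3 * k :=
    le_antisymm (hhigh (m - k - 1) k hk (by omega)) (hlow k hk)
  have hpl := hmemS _ (e ⟨k, hk⟩).2
  rw [this] at hpl
  exact hpl

theorem unique_max_plateau_path (m : ℕ) : c (3 * m) m = 1 := by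
  rw [show ((3 : ℤ) * m) = ((3 * m : ℕ) : ℤ) by push_cast; ring]
  unfold c
  rw [if_pos ⟨by positivity, by positivity⟩]
  simp only [Int.toNat_natCast]
  haveI : Unique {l : List Step // l.length = 3 * m ∧ IsMotzkin l ∧ plateauCount l = m} := by
    refine ⟨⟨⟨pathList m, pathList_length m, pathList_isMotzkin m, pathList_plateauCount m⟩⟩, ?_⟩
    rintro ⟨l, hlen, _, hp⟩
    exact Subtype.ext (unique_path hlen hp)
  exact Nat.card_unique
end
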